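/- arXiv:2211.07689 — 6 statements merged into one kernel-verified Lean document; each statement's English description precedes it below -/
import Mathlib

section
/- Let G be an n-vertex (ε,s)-expander, let U ⊆ V(G) with |U| ≤ (2/3)n, let F be a set of at most s|U|/2 edges of G, and let 0 < d ≤ s. Then either |N_{G−F}(U)| ≥ s|U|/(2d), or |N_{G−F,d}(U)| ≥ ε|U|/(log n)². -/
/-- The set of vertices outside `U` with a neighbour in `U`, i.e. `N_G(U)`. -/
def nbhdOutside {V : Type} (G : SimpleGraph V) (U : Set V) : Set V :=
  {v | v ∉ U ∧ ∃ u ∈ U, G.Adj v u}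

/-- An `(ε,s)`-expander: for every `U ⊆ V(G)` with `1 ≤ |U| ≤ (2/3)|V(G)|` and every
`F ⊆ E(G)` with `|F| ≤ s|U|`, we have `|N_{G−F}(U)| ≥ ε|U|/(log₂ |V(G)|)²`. -/
def IsExpander {V : Type} (G : SimpleGraph V) (ε s : ℝ) : Prop :=
  ∀ (U : Set V) (F : Set (Sym2 V)), F ⊆ G.edgeSet →
    1 ≤ U.ncard → (U.ncard : ℝ) ≤ 2 / 3 * (Nat.card V : ℝ) →
    (F.ncard : ℝ) ≤ s * (U.ncard : ℝ) →
    ε * (U.ncard : ℝ) / (Real.logb 2 (Nat.card V : ℝ)) ^ 2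
      ≤ ((nbhdOutside (G.deleteEdges F) U).ncard : ℝ)

/-- The robust neighbourhood `N_{G,d}(U)`: vertices outside `U` with at least `d`
neighbours in `U`. -/
def robustNbhd {V : Type} (G : SimpleGraph V) (d : ℝ) (U : Set V) : Set V :=
  {v | v ∉ U ∧ d ≤ ((G.neighborSet v ∩ U).ncard : ℝ)}

/-!
Let `B` be the set of boundary vertices of `U` in `G − F` having fewer than `d` neighbours in
`U`. The edges from `B` to `U` number at most `d|B| ≤ d|N_{G−F}(U)|`, which is below `s|U|/2`
unless the first alternative holds. Deleting them together with `F` removes at most `s|U|` edges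
and leaves only vertices of `N_{G−F,d}(U)` in the neighbourhood of `U`, so expansion bounds
`|N_{G−F,d}(U)|` from below.
-/

namespace SimpleGraph

variable {V : Type} (G : SimpleGraph V) (d : ℝ) (U : Set V)

def weakBoundary : Set V := nbhdOutside G U \ robustNbhd G d U

def weakBoundaryEdges : Set (Sym2 V) :=
  ⋃ v ∈ G.weakBoundary d U, (fun u => s(v, u)) '' (G.neighborSet v ∩ U)

variable {G d U}

lemma weakBoundaryEdges_subset_edgeSet : G.weakBoundaryEdges d U ⊆ G.edgeSet := by
  simp only [weakBoundaryEdges, Set.iUnion_subset_iff, Set.image_subset_iff]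
  exact fun v _ u hu => hu.1

lemma ncard_weakBoundaryEdges_le [Finite V] :
    ((G.weakBoundaryEdges d U).ncard : ℝ) ≤ d * (G.weakBoundary d U).ncard := by
  classical
  have hB := (G.weakBoundary d U).toFinite
  have hfew : ∀ v ∈ G.weakBoundary d U, ((G.neighborSet v ∩ U).ncard : ℝ) ≤ d :=
    fun v hv => (not_le.1 fun h => hv.2 ⟨hv.1.1, h⟩).le
  calc ((G.weakBoundaryEdges d U).ncard : ℝ)
      ≤ ∑ v ∈ hB.toFinset, (((fun u => s(v, u)) '' (G.neighborSet v ∩ U)).ncard : ℝ) := by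
        exact_mod_cast (by simpa [weakBoundaryEdges] using hB.toFinset.set_ncard_biUnion_le _)
    _ ≤ ∑ v ∈ hB.toFinset, d := by
        refine Finset.sum_le_sum fun v hv => ?_
        exact (Nat.cast_le.2 (Set.ncard_image_le)).trans (hfew v (hB.mem_toFinset.1 hv))
    _ = d * (G.weakBoundary d U).ncard := by
        rw [Finset.sum_const, nsmul_eq_mul, Set.ncard_eq_toFinset_card _ hB, mul_comm]

lemma nbhdOutside_deleteEdges_weakBoundaryEdges_subset :
    nbhdOutside (G.deleteEdges (G.weakBoundaryEdges d U)) U ⊆ robustNbhd G d U := by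
  rintro v ⟨hvU, u, huU, hadj⟩
  obtain ⟨hadj, hvu⟩ := (deleteEdges_adj ..).1 hadj
  by_contra hv
  have hvB : v ∈ G.weakBoundary d U := ⟨⟨hvU, u, huU, hadj⟩, hv⟩
  exact hvu (Set.mem_biUnion hvB (Set.mem_image_of_mem _ ⟨hadj, huU⟩))

end SimpleGraph

open SimpleGraph in
lemma IsExpander.le_ncard_robustNbhd {V : Type} [Finite V] {G : SimpleGraph V} {ε s : ℝ}
    (hG : IsExpander G ε s) {U : Set V} (hU₀ : 1 ≤ U.ncard)
    (hU : (U.ncard : ℝ) ≤ 2 / 3 * Nat.card V) {F : Set (Sym2 V)} (hFE : F ⊆ G.edgeSet)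
    {d : ℝ} (hd : 0 ≤ d)
    (hF : F.ncard + d * (nbhdOutside (G.deleteEdges F) U).ncard ≤ s * U.ncard) :
    ε * U.ncard / (Real.logb 2 (Nat.card V)) ^ 2
      ≤ (robustNbhd (G.deleteEdges F) d U).ncard := by
  set G' := G.deleteEdges F
  set E := G'.weakBoundaryEdges d U
  have hEG : E ⊆ G.edgeSet :=
    weakBoundaryEdges_subset_edgeSet.trans (edgeSet_mono (deleteEdges_le F))
  have hE : (E.ncard : ℝ) ≤ d * (nbhdOutside G' U).ncard :=
    ncard_weakBoundaryEdges_le.trans <| mul_le_mul_of_nonneg_left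
      (Nat.cast_le.2 (Set.ncard_le_ncard Set.sdiff_subset)) hd
  have hFE' : ((F ∪ E).ncard : ℝ) ≤ s * U.ncard :=
    (Nat.cast_le.2 (Set.ncard_union_le F E)).trans (by push_cast; linarith)
  have hexp := hG U (F ∪ E) (Set.union_subset hFE hEG) hU₀ hU hFE'
  rw [← deleteEdges_deleteEdges] at hexp
  exact hexp.trans (Nat.cast_le.2 (Set.ncard_le_ncard
    nbhdOutside_deleteEdges_weakBoundaryEdges_subset))

theorem expansion_alternative_general {V : Type} [Fintype V] (G : SimpleGraph V) (n : ℕ)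
    (hn : Nat.card V = n) (ε s : ℝ) (hG : IsExpander G ε s)
    (U : Set V) (hU : (U.ncard : ℝ) ≤ 2 / 3 * n)
    (F : Set (Sym2 V)) (hFE : F ⊆ G.edgeSet) (hF : (F.ncard : ℝ) ≤ s * (U.ncard : ℝ) / 2)
    (d : ℝ) (hd : 0 < d) :
    s * (U.ncard : ℝ) / (2 * d) ≤ ((nbhdOutside (G.deleteEdges F) U).ncard : ℝ) ∨
    ε * (U.ncard : ℝ) / (Real.logb 2 n) ^ 2
      ≤ ((robustNbhd (G.deleteEdges F) d U).ncard : ℝ) := by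
  subst hn
  refine or_iff_not_imp_left.2 fun hsmall => ?_
  rw [not_le, lt_div_iff₀ (by positivity)] at hsmall
  have hU₀ : 1 ≤ U.ncard := by
    by_contra! h
    simp only [Nat.lt_one_iff.1 h, CharP.cast_eq_zero, mul_zero] at hsmall
    exact hsmall.not_ge (by positivity)
  exact hG.le_ncard_robustNbhd hU₀ hU hFE hd.le (by nlinarith)

/-- In an `(ε,s)`-expander, for `|U| ≤ (2/3)n`, `|F| ≤ s|U|/2` and `0 < d ≤ s`, either
`|N_{G−F}(U)| ≥ s|U|/(2d)` or `|N_{G−F,d}(U)| ≥ ε|U|/(log n)²`. -/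
theorem expansion_alternative {V : Type} [Fintype V] (G : SimpleGraph V) (n : ℕ)
    (hn : Nat.card V = n) (ε s : ℝ) (hG : IsExpander G ε s)
    (U : Set V) (hU : (U.ncard : ℝ) ≤ 2 / 3 * n)
    (F : Set (Sym2 V)) (hFE : F ⊆ G.edgeSet) (hF : (F.ncard : ℝ) ≤ s * (U.ncard : ℝ) / 2)
    (d : ℝ) (hd : 0 < d) (hds : d ≤ s) :
    s * (U.ncard : ℝ) / (2 * d) ≤ ((nbhdOutside (G.deleteEdges F) U).ncard : ℝ) ∨
    ε * (U.ncard : ℝ) / (Real.logb 2 n) ^ 2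
      ≤ ((robustNbhd (G.deleteEdges F) d U).ncard : ℝ) :=
  expansion_alternative_general G n hn ε s hG U hU F hFE hF d hd
end

section
/- Given an n-vertex graph G, a non-negative integer s and ε ≤ 2^{-5}, one can delete at most 4sn·log n edges from G so that the remaining edges can be partitioned into the edge sets of graphs G₁, …, G_r such that Σ_{i=1}^{r} |V(G_i)| ≤ 2n and each G_i is an (ε,s)-expander. -/
/-!
If `K` (on `m` vertices) is not an `(ε,s)`-expander, the definition supplies `U` with
`|U| ≤ 2m/3` and a set `F` of at most `s|U|` edges such that `N = N_{K-F}(U)` has fewer than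
`ε|U| / log² m ≤ |U| / (32 log² m)` vertices. Delete `F`, split `K - F` into the edges meeting
`U`, living on `U ∪ N` (at most `11m/16` vertices), and the edges of `K - U`, and recurse on
both. The bound `4 s m log m` on deleted edges pays for `F` because the logarithm of the first
part is smaller by at least `1/2`. The vertices of `N` appear in both parts; the vertex bound
`2m - m / (log m + 1)` absorbs them, since its deficit on `U` grows by at least
`|U| / (6 log² m) ≥ 2|N|` when `U` moves to the part with the smaller logarithm.
-/

open Real SimpleGraph

namespace SimpleGraph.Subgraph

variable {V : Type} {G : SimpleGraph V}

lemma edgeSet_deleteEdges (K : G.Subgraph) (F : Set (Sym2 V)) :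
    (K.deleteEdges F).edgeSet = K.edgeSet \ F := by
  ext e
  induction e using Sym2.ind
  simp

lemma image_val_nbhdOutside_coe_deleteEdges (K : G.Subgraph) (U : Set K.verts)
    (F : Set (Sym2 K.verts)) :
    Subtype.val '' nbhdOutside (K.coe.deleteEdges F) U =
      nbhdOutside (K.deleteEdges (Sym2.map Subtype.val '' F)).spanningCoe
        (Subtype.val '' U) := by
  have hF (a b : K.verts) : s((a : V), b) ∈ Sym2.map Subtype.val '' F ↔ s(a, b) ∈ F := by
    rw [← Sym2.map_mk, (Sym2.map.injective Subtype.val_injective).mem_set_image]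
  ext v
  simp only [nbhdOutside, SimpleGraph.deleteEdges_adj, spanningCoe_adj, deleteEdges_adj]
  constructor
  · rintro ⟨v, ⟨hvU, u, huU, hadj, hvu⟩, rfl⟩
    exact ⟨fun ⟨w, hw, hwv⟩ => hvU (Subtype.val_injective hwv ▸ hw), u, ⟨u, huU, rfl⟩, hadj,
      (hF v u).not.2 hvu⟩
  · rintro ⟨hvU, _, ⟨u, huU, rfl⟩, hadj, hvu⟩
    exact ⟨⟨v, K.edge_vert hadj⟩,
      ⟨fun h => hvU ⟨_, h, rfl⟩, u, huU, hadj, (hF ⟨v, _⟩ u).not.1 hvu⟩, rfl⟩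

def incidentPart (K : G.Subgraph) (U : Set V) : G.Subgraph where
  verts := U ∪ nbhdOutside K.spanningCoe U
  Adj x y := K.Adj x y ∧ (x ∈ U ∨ y ∈ U)
  adj_sub h := K.adj_sub h.1
  edge_vert {x y} h := by
    by_cases hx : x ∈ U
    · exact Or.inl hx
    · exact Or.inr ⟨hx, y, h.2.resolve_left hx, h.1⟩
  symm := ⟨fun _ _ h => ⟨h.1.symm, h.2.symm⟩⟩

variable (K : G.Subgraph) (U : Set V)

@[simp]
lemma incidentPart_adj {x y : V} :
    (K.incidentPart U).Adj x y ↔ K.Adj x y ∧ (x ∈ U ∨ y ∈ U) :=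
  Iff.rfl

lemma edgeSet_incidentPart_union_deleteVerts :
    (K.incidentPart U).edgeSet ∪ (K.deleteVerts U).edgeSet = K.edgeSet := by
  ext e
  induction e using Sym2.ind with
  | _ x y =>
    have := K.edge_vert (v := x) (w := y)
    have := K.edge_vert (v := y) (w := x)
    simp only [Set.mem_union, Subgraph.mem_edgeSet, deleteVerts_adj, incidentPart_adj]
    tauto

lemma disjoint_edgeSet_incidentPart_deleteVerts :
    Disjoint (K.incidentPart U).edgeSet (K.deleteVerts U).edgeSet := by
  rw [Set.disjoint_left]
  intro e
  induction e using Sym2.ind with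
  | _ x y =>
    simp only [Subgraph.mem_edgeSet, deleteVerts_adj, incidentPart_adj]
    tauto

lemma ncard_verts_incidentPart [Finite V] :
    (K.incidentPart U).verts.ncard = U.ncard + (nbhdOutside K.spanningCoe U).ncard :=
  Set.ncard_union_eq (Set.disjoint_left.2 fun _ hx hN => hN.1 hx)

lemma ncard_verts_deleteVerts [Finite V] {U : Set V} (hU : U ⊆ K.verts) :
    (K.deleteVerts U).verts.ncard = K.verts.ncard - U.ncard :=
  Set.ncard_sdiff hU

end SimpleGraph.Subgraph

variable {V : Type} {G : SimpleGraph V}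

lemma exists_sparse_cut_of_not_isExpander {K : G.Subgraph} {ε s : ℝ}
    (hK : ¬IsExpander K.coe ε s) :
    ∃ (U : Set V) (F : Set (Sym2 V)), U ⊆ K.verts ∧ F ⊆ K.edgeSet ∧ 1 ≤ U.ncard ∧
      (U.ncard : ℝ) ≤ 2 / 3 * K.verts.ncard ∧ (F.ncard : ℝ) ≤ s * U.ncard ∧
      ((nbhdOutside (K.deleteEdges F).spanningCoe U).ncard : ℝ) <
        ε * U.ncard / logb 2 K.verts.ncard ^ 2 := by
  simp only [IsExpander, not_forall, not_le, exists_prop, Nat.card_coe_set_eq] at hK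
  obtain ⟨U, F, hFK, hU, hUK, hFU, hN⟩ := hK
  have hU_card := Set.ncard_image_of_injective U Subtype.val_injective
  have hF_card := Set.ncard_image_of_injective F (Sym2.map.injective Subtype.val_injective)
  refine ⟨_, _, Subtype.coe_image_subset _ U,
    (Set.image_mono hFK).trans K.image_coe_edgeSet_coe.le, ?_, ?_, ?_, ?_⟩
  · rwa [hU_card]
  · rwa [hU_card]
  · rwa [hU_card, hF_card]
  · rwa [hU_card, ← K.image_val_nbhdOutside_coe_deleteEdges,
      Set.ncard_image_of_injective _ Subtype.val_injective]

structure IsEdgePartition (E D : Set (Sym2 V)) {r : ℕ} (H : Fin r → G.Subgraph) : Prop where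
  pairwise_disjoint : ∀ i j, i ≠ j → Disjoint (H i).edgeSet (H j).edgeSet
  disjoint_deleted : ∀ i, Disjoint (H i).edgeSet D
  iUnion_union_eq : (⋃ i, (H i).edgeSet) ∪ D = E

namespace IsEdgePartition

variable {r r' : ℕ} {E E' D D' F : Set (Sym2 V)} {H : Fin r → G.Subgraph}
  {H' : Fin r' → G.Subgraph}

lemma single (K : G.Subgraph) : IsEdgePartition K.edgeSet ∅ fun _ : Fin 1 => K where
  pairwise_disjoint i j hij := absurd (Subsingleton.elim i j) hij
  disjoint_deleted _ := Set.disjoint_empty _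
  iUnion_union_eq := by simp [Set.iUnion_const]

lemma edgeSet_subset (h : IsEdgePartition E D H) (i : Fin r) : (H i).edgeSet ⊆ E :=
  h.iUnion_union_eq ▸ (Set.subset_iUnion (fun i => (H i).edgeSet) i).trans Set.subset_union_left

lemma deleted_subset (h : IsEdgePartition E D H) : D ⊆ E :=
  h.iUnion_union_eq ▸ Set.subset_union_right

lemma append (h : IsEdgePartition E D H) (h' : IsEdgePartition E' D' H') (hE : Disjoint E E') :
    IsEdgePartition (E ∪ E') (D ∪ D') (Fin.append H H') where
  pairwise_disjoint i j hij := by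
    induction i using Fin.addCases <;> induction j using Fin.addCases <;>
      simp only [Fin.append_left, Fin.append_right]
    · exact h.pairwise_disjoint _ _ fun hij' => hij (by rw [hij'])
    · exact hE.mono (h.edgeSet_subset _) (h'.edgeSet_subset _)
    · exact hE.symm.mono (h'.edgeSet_subset _) (h.edgeSet_subset _)
    · exact h'.pairwise_disjoint _ _ fun hij' => hij (by rw [hij'])
  disjoint_deleted i := by
    induction i using Fin.addCases <;> simp only [Fin.append_left, Fin.append_right] <;>
      refine Set.disjoint_union_right.2 ⟨?_, ?_⟩
    · exact h.disjoint_deleted _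
    · exact hE.mono (h.edgeSet_subset _) h'.deleted_subset
    · exact hE.symm.mono (h'.edgeSet_subset _) h.deleted_subset
    · exact h'.disjoint_deleted _
  iUnion_union_eq := by
    rw [← h.iUnion_union_eq, ← h'.iUnion_union_eq]
    ext e
    simp only [Set.mem_union, Set.mem_iUnion]
    rw [← not_iff_not]
    simp only [not_or, not_exists, Fin.forall_fin_add, Fin.append_left, Fin.append_right]
    tauto

lemma union_deleted (h : IsEdgePartition E D H) (hF : Disjoint E F) :
    IsEdgePartition (E ∪ F) (D ∪ F) H where
  pairwise_disjoint := h.pairwise_disjoint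
  disjoint_deleted i :=
    Set.disjoint_union_right.2 ⟨h.disjoint_deleted i, hF.mono_left (h.edgeSet_subset i)⟩
  iUnion_union_eq := by rw [← h.iUnion_union_eq, Set.union_assoc]

lemma of_incidentPart_of_deleteVerts {K : G.Subgraph} {U : Set V} (hFK : F ⊆ K.edgeSet)
    (h : IsEdgePartition ((K.deleteEdges F).incidentPart U).edgeSet D H)
    (h' : IsEdgePartition ((K.deleteEdges F).deleteVerts U).edgeSet D' H') :
    IsEdgePartition K.edgeSet (D ∪ D' ∪ F) (Fin.append H H') := by
  have hK := h.append h' ((K.deleteEdges F).disjoint_edgeSet_incidentPart_deleteVerts U)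
  rw [Subgraph.edgeSet_incidentPart_union_deleteVerts, Subgraph.edgeSet_deleteEdges] at hK
  simpa only [Set.sdiff_union_of_subset hFK] using hK.union_deleted Set.disjoint_sdiff_left

end IsEdgePartition

lemma logb_two_natCast_nonneg (m : ℕ) : 0 ≤ logb 2 m := by
  rcases m.eq_zero_or_pos with rfl | hm
  · simp
  · exact logb_nonneg one_lt_two (Nat.one_le_cast.2 hm)

lemma one_le_logb_two_natCast {m : ℕ} (hm : 2 ≤ m) : 1 ≤ logb 2 m := by
  rw [le_logb_iff_rpow_le one_lt_two (by positivity), rpow_one]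
  exact_mod_cast hm

lemma logb_two_eleven_div_sixteen_le : logb 2 (11 / 16) ≤ -(1 / 2) := by
  have h : logb 2 ((11 / 16) ^ 2) ≤ logb 2 2⁻¹ :=
    logb_le_logb_of_le one_lt_two (by norm_num) (by norm_num)
  rw [logb_pow, logb_inv, logb_self_eq_one one_lt_two] at h
  linarith

noncomputable def vertexBudget (m : ℕ) : ℝ := 2 * m - m / (logb 2 m + 1)

lemma self_le_vertexBudget (m : ℕ) : (m : ℝ) ≤ vertexBudget m := by
  have := logb_two_natCast_nonneg m
  have : (m : ℝ) / (logb 2 m + 1) ≤ m := div_le_self (by positivity) (by linarith)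
  rw [vertexBudget]
  linarith

lemma vertexBudget_le (m : ℕ) : vertexBudget m ≤ 2 * m := by
  have := logb_two_natCast_nonneg m
  have : 0 ≤ (m : ℝ) / (logb 2 m + 1) := by positivity
  rw [vertexBudget]
  linarith

section Split

variable {u ν m : ℕ}

lemma cast_add_le_of_sparse (hum : 3 * u ≤ 2 * m) (hν : 32 * logb 2 m ^ 2 * ν ≤ u)
    (hm : 2 ≤ m) : ((u + ν : ℕ) : ℝ) ≤ 11 / 16 * m := by
  have hL2 : 1 ≤ logb 2 m ^ 2 := one_le_pow₀ (one_le_logb_two_natCast hm)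
  have : (ν : ℝ) ≤ u / 32 := by nlinarith [mul_le_mul_of_nonneg_right hL2 ν.cast_nonneg]
  have : (3 * u : ℝ) ≤ 2 * m := by exact_mod_cast hum
  push_cast
  linarith

lemma logb_add_le_logb_sub_half (hum : 3 * u ≤ 2 * m) (hν : 32 * logb 2 m ^ 2 * ν ≤ u)
    (hm : 2 ≤ m) (hu : 1 ≤ u) : logb 2 (u + ν : ℕ) ≤ logb 2 m - 1 / 2 := by
  have hm0 : (0 : ℝ) < m := by positivity
  calc logb 2 (u + ν : ℕ) ≤ logb 2 (11 / 16 * m) :=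
        logb_le_logb_of_le one_lt_two (by positivity) (cast_add_le_of_sparse hum hν hm)
    _ = logb 2 (11 / 16) + logb 2 m := logb_mul (by norm_num) hm0.ne'
    _ ≤ logb 2 m - 1 / 2 := by linarith [logb_two_eleven_div_sixteen_le]

lemma logb_sub_le_logb (hum : 3 * u ≤ 2 * m) (hu : 1 ≤ u) :
    logb 2 (m - u : ℕ) ≤ logb 2 m :=
  logb_le_logb_of_le one_lt_two (by simp only [Nat.cast_pos]; omega) (by simp)

lemma mul_logb_split_le (hum : 3 * u ≤ 2 * m) (hν : 32 * logb 2 m ^ 2 * ν ≤ u)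
    (hu : 1 ≤ u) :
    (u : ℝ) / 4 + (u + ν : ℕ) * logb 2 (u + ν : ℕ) + (m - u : ℕ) * logb 2 (m - u : ℕ) ≤
      m * logb 2 m := by
  have hm : 2 ≤ m := by omega
  have hL := one_le_logb_two_natCast hm
  have hA := mul_le_mul_of_nonneg_left (logb_add_le_logb_sub_half hum hν hm hu)
    (Nat.cast_nonneg (u + ν))
  have hB := mul_le_mul_of_nonneg_left (logb_sub_le_logb hum hu) (Nat.cast_nonneg (m - u))
  have : (ν : ℝ) * logb 2 m ≤ u / 32 := by nlinarith
  push_cast [Nat.cast_sub (by omega : u ≤ m)] at hA hB ⊢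
  nlinarith

lemma vertexBudget_split_le (hum : 3 * u ≤ 2 * m) (hν : 32 * logb 2 m ^ 2 * ν ≤ u)
    (hu : 1 ≤ u) : vertexBudget (u + ν) + vertexBudget (m - u) ≤ vertexBudget m := by
  have hm : 2 ≤ m := by omega
  set L := logb 2 m
  have hL : 1 ≤ L := one_le_logb_two_natCast hm
  have hA := logb_add_le_logb_sub_half hum hν hm hu
  have hB := logb_sub_le_logb hum hu
  have hA0 := logb_two_natCast_nonneg (u + ν)
  have hB0 := logb_two_natCast_nonneg (m - u)
  have hu0 : (1 : ℝ) ≤ u := by exact_mod_cast hu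
  have hA' : (u : ℝ) / (L + 1 / 2) ≤ (u + ν : ℕ) / (logb 2 (u + ν : ℕ) + 1) :=
    div_le_div₀ (by positivity) (by push_cast; linarith [ν.cast_nonneg (α := ℝ)])
      (by linarith) (by linarith)
  have hB' : ((m - u : ℕ) : ℝ) / (L + 1) ≤ (m - u : ℕ) / (logb 2 (m - u : ℕ) + 1) :=
    div_le_div_of_nonneg_left (by positivity) (by linarith) (by linarith)
  have hgain : 2 * (ν : ℝ) ≤ u / (L + 1 / 2) - u / (L + 1) := by
    rw [div_sub_div _ _ (by positivity) (by positivity), le_div_iff₀ (by positivity)]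
    nlinarith
  have hsplit : (m : ℝ) / (L + 1) = u / (L + 1) + ((m - u : ℕ) : ℝ) / (L + 1) := by
    rw [Nat.cast_sub (by omega : u ≤ m)]
    ring
  simp only [vertexBudget]
  push_cast [Nat.cast_sub (by omega : u ≤ m)] at hA' hB' hsplit ⊢
  linarith

end Split

theorem exists_isEdgePartition_isExpander [Finite V] {ε s : ℝ} (hε : ε ≤ 1 / 32)
    (hs : 0 ≤ s) (K : G.Subgraph) :
    ∃ (D : Set (Sym2 V)) (r : ℕ) (H : Fin r → G.Subgraph),
      IsEdgePartition K.edgeSet D H ∧ (∀ i, IsExpander (H i).coe ε s) ∧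
      (D.ncard : ℝ) ≤ 4 * s * K.verts.ncard * logb 2 K.verts.ncard ∧
      ∑ i, ((H i).verts.ncard : ℝ) ≤ vertexBudget K.verts.ncard := by
  induction hm : K.verts.ncard using Nat.strong_induction_on generalizing K with
  | _ m ih =>
  by_cases hK : IsExpander K.coe ε s
  · refine ⟨∅, 1, fun _ => K, .single K, fun _ => hK, ?_, ?_⟩
    · simpa using by have := logb_two_natCast_nonneg m; positivity
    · simpa [hm] using self_le_vertexBudget m
  obtain ⟨U, F, hUK, hFK, hU, hUm, hFU, hN⟩ := exists_sparse_cut_of_not_isExpander hK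
  rw [hm] at hUm hN
  set K' := K.deleteEdges F
  set N := nbhdOutside K'.spanningCoe U
  have hsparse : 32 * logb 2 m ^ 2 * N.ncard ≤ U.ncard := by
    rcases (sq_nonneg (logb 2 m)).eq_or_lt with hL | hL
    · rw [← hL, div_zero] at hN
      exact absurd hN (Nat.cast_nonneg _).not_gt
    · rw [lt_div_iff₀ hL] at hN
      nlinarith
  have hum : 3 * U.ncard ≤ 2 * m := by
    have : (3 * U.ncard : ℝ) ≤ 2 * m := by linarith
    exact_mod_cast this
  have hAm : U.ncard + N.ncard < m := by
    have := cast_add_le_of_sparse hum hsparse (by omega)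
    have : (0 : ℝ) < m := by simp only [Nat.cast_pos]; omega
    exact_mod_cast (by linarith : ((U.ncard + N.ncard : ℕ) : ℝ) < m)
  obtain ⟨DA, rA, HA, hA, hAexp, hDA, hVA⟩ :=
    ih _ hAm (K'.incidentPart U) (K'.ncard_verts_incidentPart U)
  obtain ⟨DB, rB, HB, hB, hBexp, hDB, hVB⟩ := ih (m - U.ncard) (by omega) (K'.deleteVerts U)
    ((K'.ncard_verts_deleteVerts hUK).trans (by rw [← hm]; rfl))
  refine ⟨DA ∪ DB ∪ F, rA + rB, Fin.append HA HB, hA.of_incidentPart_of_deleteVerts hFK hB,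
    ?_, ?_, ?_⟩
  · intro i
    induction i using Fin.addCases with
    | left i => rw [Fin.append_left]; exact hAexp i
    | right i => rw [Fin.append_right]; exact hBexp i
  · have hcard : (DA ∪ DB ∪ F).ncard ≤ DA.ncard + DB.ncard + F.ncard :=
      (Set.ncard_union_le _ _).trans (Nat.add_le_add_right (Set.ncard_union_le _ _) _)
    have := mul_le_mul_of_nonneg_left (mul_logb_split_le hum hsparse hU)
      (by positivity : 0 ≤ 4 * s)
    calc ((DA ∪ DB ∪ F).ncard : ℝ) ≤ DA.ncard + DB.ncard + F.ncard := mod_cast hcard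
      _ ≤ 4 * s * m * logb 2 m := by linarith
  · rw [Fin.sum_univ_add]
    simp only [Fin.append_left, Fin.append_right]
    exact (add_le_add hVA hVB).trans (vertexBudget_split_le hum hsparse hU)

/-- Any `n`-vertex graph `G` can, after deleting at most `4sn·log n` edges, have its
remaining edges partitioned into subgraphs `G₁,…,G_r` with `Σ|V(Gᵢ)| ≤ 2n`, each an
`(ε,s)`-expander. -/
theorem almost_decomposition_into_expanders
    (n : ℕ) (V : Type) [Fintype V] (G : SimpleGraph V) (hn : Nat.card V = n)
    (s : ℕ) (ε : ℝ) (hε : ε ≤ (2 : ℝ) ^ (-5 : ℤ)) :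
    ∃ (D : Set (Sym2 V)) (r : ℕ) (H : Fin r → G.Subgraph),
      D ⊆ G.edgeSet ∧
      (D.ncard : ℝ) ≤ 4 * s * n * Real.logb 2 n ∧
      (∀ i j, i ≠ j → Disjoint (H i).edgeSet (H j).edgeSet) ∧
      (∀ i, Disjoint (H i).edgeSet D) ∧
      ((⋃ i, (H i).edgeSet) ∪ D = G.edgeSet) ∧
      (∑ i, (H i).verts.ncard) ≤ 2 * n ∧
      (∀ i, IsExpander (H i).coe ε s) := by
  have hε' : ε ≤ 1 / 32 := by norm_num at hε; linarith
  obtain ⟨D, r, H, hH, hexp, hD, hV⟩ :=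
    exists_isEdgePartition_isExpander hε' s.cast_nonneg (⊤ : G.Subgraph)
  rw [Subgraph.verts_top, Set.ncard_univ, hn] at hD hV
  refine ⟨D, r, H, hH.deleted_subset, hD, hH.pairwise_disjoint, hH.disjoint_deleted,
    hH.iUnion_union_eq, ?_, hexp⟩
  exact_mod_cast hV.trans (vertexBudget_le n)
end

section
/- Let n, k, s be positive integers and 0 < ε ≤ 1. Suppose G is an n-vertex (ε,s)-expander and s ≥ 2^{12}·ε^{-1}·k²·(log n)^4. Then there are edge disjoint graphs G₁, …, G_k, each with vertex set V(G), such that E(G) = ⋃_{i∈[k]} E(G_i) and each G_i is an (ε/4, √(sε)/(8k·log n))-expander. -/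
/-!
Colour the edges of `G` uniformly at random with `k` colours. Expansion is equivalent to an edge
count: whenever `|W| < ε|U|/(log n)²`, more than `s|U|` edges of `G` go from `U` to the outside
of `U ∪ W`. If at most `t` of these `m` edges get colour `i`, then colour `i` is avoided off some
`t`-subset of them, which has probability at most
`(m + 1)^t (1 - 1/k)^(m - t) ≤ n^(3t) e^((t - s|U|)/k)`. For `t ≈ √(sε)|U|/(8k log n)`,
`|W| ≤ ε|U|/(4 (log n)²)` and `s ≥ 2¹²ε⁻¹k²(log n)⁴` this is at most `1/(2n)` times the reciprocal
of the number `k n^|U| n^(2|W|)` of choices of `i`, `U` and `W` for a given size of `U`. So some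
colouring has no bad triple, and by the same equivalence each of its colour classes is an
`(ε/4, √(sε)/(8k log n))`-expander.
-/

open Finset Real

theorem card_powerset_filter_card_le_le {α : Type*} (X : Finset α) (t : ℕ) :
    #{S ∈ X.powerset | #S ≤ t} ≤ (#X + 1) ^ t := by
  classical
  induction t with
  | zero =>
    simp only [nonpos_iff_eq_zero, card_eq_zero, pow_zero]
    exact card_le_one.2 fun a ha b hb => by simp_all
  | succ t ih =>
    have hsub : {S ∈ X.powerset | #S ≤ t + 1} ⊆
        {S ∈ X.powerset | #S ≤ t} ∪ powersetCard (t + 1) X := by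
      intro S hS
      simp only [mem_filter, mem_powerset, mem_union, mem_powersetCard] at hS ⊢
      exact (Nat.le_succ_iff.1 hS.2).imp (⟨hS.1, ·⟩) (⟨hS.1, ·⟩)
    calc #{S ∈ X.powerset | #S ≤ t + 1}
        ≤ (#X + 1) ^ t + (#X).choose (t + 1) :=
          (card_le_card hsub).trans ((card_union_le _ _).trans (by rw [card_powersetCard]; gcongr))
      _ ≤ (#X + 1) ^ t + #X * (#X + 1) ^ t := by
          gcongr
          calc (#X).choose (t + 1) ≤ #X ^ (t + 1) := Nat.choose_le_pow _ _
            _ = #X * #X ^ t := by ring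
            _ ≤ #X * (#X + 1) ^ t := by gcongr; omega
      _ = (#X + 1) ^ (t + 1) := by ring

theorem sum_le_sum_Icc_pow_mul {α : Type*} [Fintype α] {S : Finset (Finset α)}
    (hS : ∀ U ∈ S, 1 ≤ #U) {f : ℕ → ℝ} (hf : ∀ u, 0 ≤ f u) :
    ∑ U ∈ S, f #U ≤ ∑ u ∈ Icc 1 (Nat.card α), (Nat.card α : ℝ) ^ u * f u := by
  rw [Nat.card_eq_fintype_card, ← sum_fiberwise_of_maps_to (g := card)
    fun U hU => mem_Icc.2 ⟨hS U hU, card_le_univ U⟩]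
  refine sum_le_sum fun u _ => ?_
  rw [sum_congr rfl fun U hU => by rw [(mem_filter.1 hU).2], sum_const, nsmul_eq_mul]
  refine mul_le_mul_of_nonneg_right ?_ (hf u)
  have hcard : #{U ∈ S | #U = u} ≤ Fintype.card α ^ u :=
    calc _ ≤ #(powersetCard u (univ : Finset α)) := card_le_card fun U hU =>
          mem_powersetCard.2 ⟨subset_univ _, (mem_filter.1 hU).2⟩
      _ = (Fintype.card α).choose u := by rw [card_powersetCard, card_univ]
      _ ≤ _ := Nat.choose_le_pow _ _
  exact_mod_cast hcard

section Colorings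

variable {D : Type*} [Fintype D] [DecidableEq D] {k : ℕ}

theorem card_colorings_avoiding (R : Finset D) (i : Fin k) :
    #{c : D → Fin k | ∀ e ∈ R, c e ≠ i} = (k - 1) ^ #R * k ^ (Fintype.card D - #R) := by
  have hpi : ({c : D → Fin k | ∀ e ∈ R, c e ≠ i} : Finset _) =
      Fintype.piFinset fun e => if e ∈ R then univ.erase i else univ := by
    ext c
    simp only [mem_filter, mem_univ, true_and, Fintype.mem_piFinset]
    refine forall_congr' fun e => ?_
    split_ifs <;> simp [*]
  rw [hpi, Fintype.card_piFinset]
  simp only [apply_ite card, card_erase_of_mem (mem_univ _), card_univ, Fintype.card_fin]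
  rw [prod_ite, prod_const, prod_const, filter_mem_eq_inter, univ_inter, filter_not,
    filter_mem_eq_inter, univ_inter, ← compl_eq_univ_sdiff, card_compl]

theorem card_colorings_avoiding_le (R : Finset D) (i : Fin k) :
    (#{c : D → Fin k | ∀ e ∈ R, c e ≠ i} : ℝ) ≤ k ^ Fintype.card D * exp (-#R / k) := by
  have hk : (1 : ℝ) ≤ k := by exact_mod_cast i.pos
  have hk1 : ((k - 1 : ℕ) : ℝ) ≤ k * exp (-1 / k) := by
    rw [Nat.cast_sub (by exact_mod_cast hk), Nat.cast_one, neg_div]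
    calc (k : ℝ) - 1 = k * (1 - 1 / k) := by field_simp
      _ ≤ k * exp (-(1 / k)) := by gcongr; exact one_sub_le_exp_neg _
  rw [card_colorings_avoiding]
  push_cast
  calc ((k - 1 : ℕ) : ℝ) ^ #R * (k : ℝ) ^ (Fintype.card D - #R)
      ≤ (k * exp (-1 / k)) ^ #R * (k : ℝ) ^ (Fintype.card D - #R) := by gcongr
    _ = k ^ Fintype.card D * exp (-#R / k) := by
      rw [mul_pow, ← exp_nat_mul, mul_right_comm, ← pow_add, Nat.add_sub_cancel' (card_le_univ R)]
      ring_nf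

theorem card_colorings_few_le (T : Finset D) (i : Fin k) (t : ℕ) :
    (#{c : D → Fin k | #{e ∈ T | c e = i} ≤ t} : ℝ) ≤
      (#T + 1) ^ t * (k ^ Fintype.card D * exp ((t - #T) / k)) := by
  have hsub : ({c : D → Fin k | #{e ∈ T | c e = i} ≤ t} : Finset _) ⊆
      {S ∈ T.powerset | #S ≤ t}.biUnion
        fun S => ({c | ∀ e ∈ T \ S, c e ≠ i} : Finset (D → Fin k)) := by
    intro c hc
    simp only [mem_filter, mem_univ, true_and] at hc
    simp only [mem_biUnion, mem_filter, mem_powerset, mem_univ, true_and, mem_sdiff]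
    exact ⟨_, ⟨filter_subset _ _, hc⟩, fun e ⟨heT, he⟩ hce => he (mem_filter.2 ⟨heT, hce⟩)⟩
  calc (#{c : D → Fin k | #{e ∈ T | c e = i} ≤ t} : ℝ)
      ≤ ∑ S ∈ T.powerset with #S ≤ t, (#{c : D → Fin k | ∀ e ∈ T \ S, c e ≠ i} : ℝ) := by
        exact_mod_cast (card_le_card hsub).trans card_biUnion_le
    _ ≤ ∑ S ∈ T.powerset with #S ≤ t, (k ^ Fintype.card D * exp ((t - #T) / k) : ℝ) := by
        refine sum_le_sum fun S hS => (card_colorings_avoiding_le _ i).trans ?_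
        simp only [mem_filter, mem_powerset] at hS
        have : (#T : ℝ) - t ≤ #(T \ S) := by
          rw [card_sdiff_of_subset hS.1, Nat.cast_sub (card_le_card hS.1)]
          have : (#S : ℝ) ≤ t := by exact_mod_cast hS.2
          linarith
        gcongr
        linarith
    _ ≤ (#T + 1) ^ t * (k ^ Fintype.card D * exp ((t - #T) / k)) := by
        rw [sum_const, nsmul_eq_mul]
        gcongr
        exact_mod_cast card_powerset_filter_card_le_le T t

end Colorings

theorem two_mul_add_mul_le_sub_div {k u w t L ε s : ℝ} (hk : 1 ≤ k) (hu : 1 ≤ u) (hL : 1 ≤ L)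
    (hε0 : 0 < ε) (hε1 : ε ≤ 1) (hs : 2 ^ 12 * ε⁻¹ * k ^ 2 * L ^ 4 ≤ s)
    (hw : w ≤ ε / 4 * u / L ^ 2) (ht0 : 0 ≤ t) (ht : t ≤ √(s * ε) / (8 * k * L) * u) :
    2 * k + (u + 2 * w + 3 * t + 1) * L ≤ (s * u - t) / k := by
  have hL4 : 1 ≤ L ^ 4 := one_le_pow₀ hL
  have hs' : 2 ^ 12 * k ^ 2 * L ^ 4 ≤ s := by
    refine le_trans ?_ hs
    have : 1 ≤ ε⁻¹ := one_le_inv_iff₀.2 ⟨hε0, hε1⟩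
    have : 0 ≤ 2 ^ 12 * k ^ 2 * L ^ 4 := by positivity
    nlinarith
  have hsqrt : √(s * ε) ≤ s := by
    have : 1 ≤ s := by nlinarith [one_le_pow₀ hk (n := 2)]
    rw [sqrt_le_left (by linarith)]
    nlinarith
  have hwu : w ≤ u := by
    refine hw.trans ?_
    rw [div_le_iff₀ (by positivity)]
    nlinarith [one_le_pow₀ hL (n := 2)]
  have htLk : t * L * k ≤ s * u / 8 :=
    calc t * L * k ≤ √(s * ε) / (8 * k * L) * u * (L * k) := by
          rw [mul_assoc]; gcongr
      _ = √(s * ε) * u / 8 := by field_simp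
      _ ≤ s * u / 8 := by gcongr
  have ht' : t ≤ s * u / 8 := by
    nlinarith [mul_le_mul_of_nonneg_left (one_le_mul_of_one_le_of_one_le hL hk) ht0]
  rw [le_div_iff₀ (by positivity)]
  have h1 : k ^ 2 ≤ k ^ 2 * L ^ 4 * u := by nlinarith [one_le_mul_of_one_le_of_one_le hL4 hu]
  have h2 : k * L * u ≤ k ^ 2 * L ^ 4 * u := by
    have : k * L ≤ k ^ 2 * L ^ 4 :=
      mul_le_mul (by nlinarith) (by nlinarith [one_le_pow₀ hL (n := 3)]) (by linarith)
        (by positivity)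
    nlinarith
  have h3 : 2 ^ 12 * k ^ 2 * L ^ 4 * u ≤ s * u := by nlinarith
  have h4 : (2 * w + 1) * L * k ≤ 3 * u * L * k := by
    have : 0 ≤ L * k := by positivity
    nlinarith
  nlinarith

theorem two_mul_mul_pow_mul_exp_le_one {n k u w t : ℕ} {ε s : ℝ} (hn : 2 ≤ n) (hk : 0 < k)
    (hu : 1 ≤ u) (hε0 : 0 < ε) (hε1 : ε ≤ 1) (hs : 2 ^ 12 * ε⁻¹ * k ^ 2 * logb 2 n ^ 4 ≤ s)
    (hw : (w : ℝ) ≤ ε / 4 * u / logb 2 n ^ 2) (ht : (t : ℝ) ≤ √(s * ε) / (8 * k * logb 2 n) * u) :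
    2 * n * k * ((n : ℝ) ^ (u + 2 * w + 3 * t) * exp ((t - s * u) / k)) ≤ 1 := by
  have hn0 : (0 : ℝ) < n := by positivity
  have hL : 1 ≤ logb 2 n := by
    rw [le_logb_iff_rpow_le one_lt_two hn0, rpow_one]; exact_mod_cast hn
  have hlog : log n ≤ logb 2 n :=
    le_div_self (log_nonneg (by exact_mod_cast hn.trans' one_le_two)) (log_pos one_lt_two)
      (by linarith [log_two_lt_d9])
  have key := two_mul_add_mul_le_sub_div (by exact_mod_cast hk) (by exact_mod_cast hu) hL hε0 hε1
    hs hw (by positivity) ht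
  calc 2 * n * k * ((n : ℝ) ^ (u + 2 * w + 3 * t) * exp ((t - s * u) / k))
      = (2 * k) * (n : ℝ) ^ (u + 2 * w + 3 * t + 1) * exp ((t - s * u) / k) := by ring
    _ ≤ exp (2 * k) * exp ((u + 2 * w + 3 * t + 1) * logb 2 n) * exp ((t - s * u) / k) := by
        gcongr
        · linarith [add_one_le_exp (2 * k : ℝ)]
        · rw [← rpow_natCast, rpow_def_of_pos hn0, mul_comm]
          push_cast
          gcongr
    _ = exp (2 * k + (u + 2 * w + 3 * t + 1) * logb 2 n - (s * u - t) / k) := by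
        rw [← exp_add, ← exp_add]; ring_nf
    _ ≤ 1 := exp_le_one_iff.2 (by linarith)

section Expansion

variable {V : Type}

def edgeColorClass {ι : Type*} (G : SimpleGraph V) (c : Sym2 V → ι) (i : ι) : SimpleGraph V :=
  G.deleteEdges {e | c e ≠ i}

theorem edgeSet_edgeColorClass {ι : Type*} (G : SimpleGraph V) (c : Sym2 V → ι) (i : ι) :
    (edgeColorClass G c i).edgeSet = {e ∈ G.edgeSet | c e = i} := by
  ext e; simp [edgeColorClass]

theorem isExpander_of_card_le_one (G : SimpleGraph V) (ε s : ℝ) (h : Nat.card V ≤ 1) :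
    IsExpander G ε s := by
  intro U F _ hU1 hU2 _
  have : (Nat.card V : ℝ) ≤ 1 := by exact_mod_cast h
  have : (1 : ℝ) ≤ U.ncard := by exact_mod_cast hU1
  linarith

open scoped Classical

variable [Fintype V]

noncomputable def leavingEdges (G : SimpleGraph V) (U W : Finset V) : Finset (Sym2 V) :=
  {e ∈ G.edgeFinset | ∃ x ∈ U, ∃ y ∉ U ∪ W, e = s(x, y)}

theorem coe_leavingEdges_subset_iff {G : SimpleGraph V} {U W : Finset V} {F : Set (Sym2 V)} :
    ↑(leavingEdges G U W) ⊆ F ↔ nbhdOutside (G.deleteEdges F) U ⊆ W := by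
  constructor
  · rintro h v ⟨hvU, x, hxU, hadj⟩
    by_contra hvW
    refine (SimpleGraph.deleteEdges_adj.1 hadj).2 (h ?_)
    simp only [leavingEdges, coe_filter, SimpleGraph.mem_edgeFinset, Set.mem_ofPred_eq]
    exact ⟨hadj.1, x, hxU, v, by simp_all, Sym2.eq_swap⟩
  · rintro h e he
    simp only [leavingEdges, coe_filter, SimpleGraph.mem_edgeFinset, Set.mem_ofPred_eq] at he
    obtain ⟨heG, x, hxU, y, hy, rfl⟩ := he
    by_contra heF
    rw [mem_union, not_or] at hy
    exact hy.2 (h ⟨hy.1, x, hxU, SimpleGraph.deleteEdges_adj.2 ⟨heG.symm, by rwa [Sym2.eq_swap]⟩⟩)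

theorem card_leavingEdges_le (G : SimpleGraph V) (U W : Finset V) :
    #(leavingEdges G U W) ≤ Nat.card V ^ 2 :=
  calc #(leavingEdges G U W) ≤ #G.edgeFinset := card_filter_le _ _
    _ ≤ (Fintype.card V).choose 2 := G.card_edgeFinset_le_card_choose_two
    _ ≤ Nat.card V ^ 2 := Nat.card_eq_fintype_card (α := V) ▸ Nat.choose_le_pow _ _

theorem isExpander_iff_lt_card_leavingEdges {G : SimpleGraph V} {ε s : ℝ} :
    IsExpander G ε s ↔ ∀ U W : Finset V, 1 ≤ #U → (#U : ℝ) ≤ 2 / 3 * Nat.card V →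
      (#W : ℝ) < ε * #U / logb 2 (Nat.card V) ^ 2 → s * #U < #(leavingEdges G U W) := by
  constructor
  · intro hG U W hU1 hU2 hW
    by_contra! hT
    have hN := hG U (leavingEdges G U W) (fun e he => by
        simp only [leavingEdges, coe_filter, SimpleGraph.mem_edgeFinset] at he; exact he.1)
      (by rwa [Set.ncard_coe_finset]) (by rwa [Set.ncard_coe_finset])
      (by rwa [Set.ncard_coe_finset, Set.ncard_coe_finset])
    have hNW : (nbhdOutside (G.deleteEdges (leavingEdges G U W)) U).ncard ≤ #W := by
      simpa using Set.ncard_le_ncard (coe_leavingEdges_subset_iff.1 subset_rfl)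
    rw [Set.ncard_coe_finset] at hN
    linarith [(Nat.cast_le (α := ℝ)).2 hNW]
  · intro h U F hF hU1 hU2 hFU
    by_contra! hN
    set N := nbhdOutside (G.deleteEdges F) U
    have hT := h U.toFinset N.toFinset (by rwa [← Set.ncard_eq_toFinset_card'])
      (by rwa [← Set.ncard_eq_toFinset_card']) (by rwa [← Set.ncard_eq_toFinset_card',
        ← Set.ncard_eq_toFinset_card'])
    have hTF : #(leavingEdges G U.toFinset N.toFinset) ≤ F.ncard := by
      rw [← Set.ncard_coe_finset]
      exact Set.ncard_le_ncard (coe_leavingEdges_subset_iff.2 (by simp [N]))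
    rw [← Set.ncard_eq_toFinset_card'] at hT
    linarith [(Nat.cast_le (α := ℝ)).2 hTF]

theorem leavingEdges_edgeColorClass {ι : Type*} [DecidableEq ι] (G : SimpleGraph V)
    (c : Sym2 V → ι) (i : ι) (U W : Finset V) :
    leavingEdges (edgeColorClass G c i) U W = {e ∈ leavingEdges G U W | c e = i} := by
  ext e
  simp only [leavingEdges, mem_filter, SimpleGraph.mem_edgeFinset, edgeSet_edgeColorClass,
    Set.mem_ofPred_eq]
  tauto

theorem card_colorings_few_leavingEdges_le {G : SimpleGraph V} {ε s : ℝ} {k : ℕ}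
    (hn : 2 ≤ Nat.card V) (hG : IsExpander G ε s) {U W : Finset V} (hU1 : 1 ≤ #U)
    (hU2 : (#U : ℝ) ≤ 2 / 3 * Nat.card V) (hW : (#W : ℝ) < ε * #U / logb 2 (Nat.card V) ^ 2)
    (i : Fin k) (t : ℕ) :
    (#{c : Sym2 V → Fin k | #{e ∈ leavingEdges G U W | c e = i} ≤ t} : ℝ) ≤
      k ^ Fintype.card (Sym2 V) * ((Nat.card V : ℝ) ^ (3 * t) * exp ((t - s * #U) / k)) := by
  have hT : (#(leavingEdges G U W) : ℝ) + 1 ≤ (Nat.card V : ℝ) ^ 3 := by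
    have : (#(leavingEdges G U W) : ℝ) ≤ (Nat.card V : ℝ) ^ 2 := by
      exact_mod_cast card_leavingEdges_le G U W
    have : (2 : ℝ) ≤ Nat.card V := by exact_mod_cast hn
    nlinarith
  have hsT := isExpander_iff_lt_card_leavingEdges.1 hG U W hU1 hU2 hW
  have hk : (0 : ℝ) < k := by exact_mod_cast i.pos
  refine (card_colorings_few_le _ i t).trans ?_
  rw [mul_left_comm, pow_mul]
  gcongr

theorem sum_card_colorings_few_leavingEdges_le {G : SimpleGraph V} {ε s : ℝ} {k : ℕ}
    (hn : 2 ≤ Nat.card V) (hG : IsExpander G ε s) {U : Finset V} (hU1 : 1 ≤ #U)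
    (hU2 : (#U : ℝ) ≤ 2 / 3 * Nat.card V) {w : ℕ}
    (hw : (w : ℝ) < ε * #U / logb 2 (Nat.card V) ^ 2) (i : Fin k) (t : ℕ) :
    ∑ W ∈ univ.powerset with #W ≤ w,
      (#{c : Sym2 V → Fin k | #{e ∈ leavingEdges G U W | c e = i} ≤ t} : ℝ) ≤
      k ^ Fintype.card (Sym2 V) *
        ((Nat.card V : ℝ) ^ (2 * w + 3 * t) * exp ((t - s * #U) / k)) := by
  have hsmall : (#{W ∈ (univ : Finset V).powerset | #W ≤ w} : ℝ) ≤ (Nat.card V : ℝ) ^ (2 * w) := by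
    have h := card_powerset_filter_card_le_le (univ : Finset V) w
    rw [card_univ, ← Nat.card_eq_fintype_card] at h
    have : (2 : ℝ) ≤ Nat.card V := by exact_mod_cast hn
    calc _ ≤ ((Nat.card V : ℝ) + 1) ^ w := by exact_mod_cast h
      _ ≤ (Nat.card V : ℝ) ^ (2 * w) := by rw [pow_mul]; gcongr; nlinarith
  calc _ ≤ ∑ W ∈ univ.powerset with #W ≤ w,
        k ^ Fintype.card (Sym2 V) * ((Nat.card V : ℝ) ^ (3 * t) * exp ((t - s * #U) / k)) := by
        refine sum_le_sum fun W hW => card_colorings_few_leavingEdges_le hn hG hU1 hU2 ?_ i t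
        exact lt_of_le_of_lt (by exact_mod_cast (mem_filter.1 hW).2) hw
    _ ≤ _ := by
        rw [sum_const, nsmul_eq_mul, pow_add]
        calc _ ≤ (Nat.card V : ℝ) ^ (2 * w) * (k ^ Fintype.card (Sym2 V) *
              ((Nat.card V : ℝ) ^ (3 * t) * exp ((t - s * #U) / k))) := by gcongr
          _ = _ := by ring

noncomputable def badColorings (G : SimpleGraph V) (k : ℕ) (w t : ℕ → ℕ) :
    Finset (Sym2 V → Fin k) :=
  {c | ∃ i, ∃ U : Finset V, 1 ≤ #U ∧ (#U : ℝ) ≤ 2 / 3 * Nat.card V ∧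
    ∃ W : Finset V, #W ≤ w #U ∧ #{e ∈ leavingEdges G U W | c e = i} ≤ t #U}

theorem card_badColorings_lt {G : SimpleGraph V} {ε s : ℝ} {k : ℕ} (hk : 0 < k)
    (hn : 2 ≤ Nat.card V) (hG : IsExpander G ε s) {w t : ℕ → ℕ}
    (hw : ∀ u, 1 ≤ u → (w u : ℝ) < ε * u / logb 2 (Nat.card V) ^ 2)
    (hwt : ∀ u, 1 ≤ u → 2 * Nat.card V * k *
      ((Nat.card V : ℝ) ^ (u + 2 * w u + 3 * t u) * exp ((t u - s * u) / k)) ≤ 1) :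
    #(badColorings G k w t) < k ^ Fintype.card (Sym2 V) := by
  set n := Nat.card V
  set N := Fintype.card (Sym2 V)
  set valid : Finset (Finset V) := {U | 1 ≤ #U ∧ (#U : ℝ) ≤ 2 / 3 * n}
  set bad : Fin k → Finset V → Finset V → Finset (Sym2 V → Fin k) :=
    fun i U W => {c | #{e ∈ leavingEdges G U W | c e = i} ≤ t #U}
  set γ : ℕ → ℝ := fun u => (n : ℝ) ^ (2 * w u + 3 * t u) * exp ((t u - s * u) / k)
  have hsub : badColorings G k w t ⊆ (univ : Finset (Fin k)).biUnion fun i =>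
      valid.biUnion fun U => {W ∈ (univ : Finset V).powerset | #W ≤ w #U}.biUnion (bad i U) := by
    intro c hc
    obtain ⟨i, U, hU1, hU2, W, hW, hle⟩ := (mem_filter.1 hc).2
    simp only [mem_biUnion, mem_univ, true_and, mem_filter, mem_powerset, subset_univ, valid, bad]
    exact ⟨i, U, ⟨hU1, hU2⟩, W, hW, hle⟩
  have hn0 : (0 : ℝ) < n := by positivity
  suffices (#(badColorings G k w t) : ℝ) < k ^ N by exact_mod_cast this
  calc _ ≤ ∑ i : Fin k, ∑ U ∈ valid, ∑ W ∈ univ.powerset with #W ≤ w #U, (#(bad i U W) : ℝ) := by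
        exact_mod_cast (card_le_card hsub).trans <| card_biUnion_le.trans <| sum_le_sum
          fun i _ => card_biUnion_le.trans <| sum_le_sum fun U _ => card_biUnion_le
    _ ≤ ∑ _i : Fin k, ∑ U ∈ valid, (k : ℝ) ^ N * γ #U := by
        refine sum_le_sum fun i _ => sum_le_sum fun U hU => ?_
        simp only [valid, mem_filter, mem_univ, true_and] at hU
        exact sum_card_colorings_few_leavingEdges_le hn hG hU.1 hU.2 (hw _ hU.1) i _
    _ = k ^ N * (k * ∑ U ∈ valid, γ #U) := by
        rw [sum_const, card_univ, Fintype.card_fin, nsmul_eq_mul, ← mul_sum]; ring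
    _ ≤ k ^ N * (k * ∑ u ∈ Icc 1 n, (n : ℝ) ^ u * γ u) := by
        gcongr
        exact sum_le_sum_Icc_pow_mul (fun U hU => (mem_filter.1 hU).2.1) fun u => by positivity
    _ ≤ k ^ N * ∑ _u ∈ Icc 1 n, 1 / (2 * (n : ℝ)) := by
        rw [mul_sum]
        gcongr with u hu
        rw [le_div_iff₀ (by positivity)]
        refine le_of_eq_of_le ?_ (hwt u (mem_Icc.1 hu).1)
        simp only [γ, pow_add]
        ring
    _ < k ^ N := by
        rw [sum_const, Nat.card_Icc, Nat.add_sub_cancel, nsmul_eq_mul]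
        field_simp
        linarith

theorem exists_coloring_forall_lt_card_leavingEdges {G : SimpleGraph V} {ε s : ℝ} {k : ℕ}
    (hk : 0 < k) (hn : 2 ≤ Nat.card V) (hε0 : 0 < ε) (hε1 : ε ≤ 1) (hG : IsExpander G ε s)
    (hs : 2 ^ 12 * ε⁻¹ * k ^ 2 * logb 2 (Nat.card V) ^ 4 ≤ s) :
    ∃ c : Sym2 V → Fin k, ∀ i (U W : Finset V), 1 ≤ #U → (#U : ℝ) ≤ 2 / 3 * Nat.card V →
      (#W : ℝ) < ε / 4 * #U / logb 2 (Nat.card V) ^ 2 →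
      √(s * ε) / (8 * k * logb 2 (Nat.card V)) * #U < #{e ∈ leavingEdges G U W | c e = i} := by
  set L := logb 2 (Nat.card V)
  have hL : 0 < L := logb_pos one_lt_two (by exact_mod_cast hn)
  set w : ℕ → ℕ := fun u => ⌊ε / 4 * u / L ^ 2⌋₊
  set t : ℕ → ℕ := fun u => ⌊√(s * ε) / (8 * k * L) * u⌋₊
  have hw (u : ℕ) : (w u : ℝ) ≤ ε / 4 * u / L ^ 2 := Nat.floor_le (by positivity)
  have hbad := card_badColorings_lt (t := t) hk hn hG
    (fun u hu => (hw u).trans_lt (by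
      have : (0 : ℝ) < u := by exact_mod_cast hu
      gcongr
      linarith))
    (fun u hu => two_mul_mul_pow_mul_exp_le_one hn hk hu hε0 hε1 hs (hw u)
      (Nat.floor_le (by positivity)))
  obtain ⟨c, -, hc⟩ := exists_mem_notMem_of_card_lt_card (t := univ)
    (by rwa [card_univ, Fintype.card_fun, Fintype.card_fin] : #(badColorings G k w t) < _)
  refine ⟨c, fun i U W hU1 hU2 hW => (Nat.floor_lt (by positivity)).1 (lt_of_not_ge fun hle => ?_)⟩
  exact hc (mem_filter.2 ⟨mem_univ _, i, U, hU1, hU2, W, Nat.le_floor hW.le, hle⟩)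

end Expansion

theorem edge_partition_into_expanders_general
    (n k s : ℕ) (hk : 0 < k)
    (ε : ℝ) (hε0 : 0 < ε) (hε1 : ε ≤ 1)
    (V : Type) [Fintype V] (G : SimpleGraph V) (hcard : Nat.card V = n)
    (hG : IsExpander G ε s)
    (hsbig : 2 ^ 12 * ε⁻¹ * (k : ℝ) ^ 2 * (Real.logb 2 n) ^ 4 ≤ (s : ℝ)) :
    ∃ H : Fin k → SimpleGraph V,
      (∀ i j, i ≠ j → Disjoint (H i).edgeSet (H j).edgeSet) ∧
      ((⋃ i, (H i).edgeSet) = G.edgeSet) ∧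
      (∀ i, IsExpander (H i) (ε / 4) (Real.sqrt ((s : ℝ) * ε) / (8 * k * Real.logb 2 n))) := by
  subst hcard
  obtain ⟨c, hc⟩ : ∃ c : Sym2 V → Fin k, ∀ i, IsExpander (edgeColorClass G c i) (ε / 4)
      (√(s * ε) / (8 * k * logb 2 (Nat.card V))) := by
    rcases lt_or_ge (Nat.card V) 2 with hn | hn
    · exact ⟨fun _ => ⟨0, hk⟩, fun i => isExpander_of_card_le_one _ _ _ (by omega)⟩
    obtain ⟨c, hc⟩ := exists_coloring_forall_lt_card_leavingEdges hk hn hε0 hε1 hG hsbig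
    refine ⟨c, fun i => isExpander_iff_lt_card_leavingEdges.2 fun U W hU1 hU2 hW => ?_⟩
    rw [leavingEdges_edgeColorClass]
    exact hc i U W hU1 hU2 hW
  refine ⟨edgeColorClass G c, fun i j hij => ?_, ?_, hc⟩
  · simp only [edgeSet_edgeColorClass, Set.disjoint_left]
    exact fun e hi hj => hij (hi.2.symm.trans hj.2)
  · ext e; simp [edgeSet_edgeColorClass]

/-- An `(ε,s)`-expander with `s ≥ 2¹²ε⁻¹k²(log n)⁴` has its edges partitioned into `k`
edge disjoint graphs on the same vertex set, each an `(ε/4, √(sε)/(8k·log n))`-expander. -/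
theorem edge_partition_into_expanders
    (n k s : ℕ) (hn : 0 < n) (hk : 0 < k) (hs : 0 < s)
    (ε : ℝ) (hε0 : 0 < ε) (hε1 : ε ≤ 1)
    (V : Type) [Fintype V] (G : SimpleGraph V) (hcard : Nat.card V = n)
    (hG : IsExpander G ε s)
    (hsbig : 2 ^ 12 * ε⁻¹ * (k : ℝ) ^ 2 * (Real.logb 2 n) ^ 4 ≤ (s : ℝ)) :
    ∃ H : Fin k → SimpleGraph V,
      (∀ i j, i ≠ j → Disjoint (H i).edgeSet (H j).edgeSet) ∧
      ((⋃ i, (H i).edgeSet) = G.edgeSet) ∧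
      (∀ i, IsExpander (H i) (ε / 4) (Real.sqrt ((s : ℝ) * ε) / (8 * k * Real.logb 2 n))) :=
  edge_partition_into_expanders_general n k s hk ε hε0 hε1 V G hcard hG hsbig
end

section
/- Let n ≥ 2, 0 < ε ≤ 1 and s ≥ (log n)^24. Let G be an n-vertex (ε,s)-expander and let U ⊆ V(G) have size |U| ≤ (2/3)n. Then there is a set U' ⊆ U with |N_G(U')| ≥ |U'|·(log n)^24 and |U'| ≥ ε|U|/(3(log n)^26). -/
theorem Set.Finite.ncard_biUnion_le_mul {ι α : Type*} {t : Set ι} (ht : t.Finite)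
    (s : ι → Set α) {k : ℝ} (hk : ∀ i ∈ t, ((s i).ncard : ℝ) ≤ k) :
    ((⋃ i ∈ t, s i).ncard : ℝ) ≤ k * t.ncard := by
  have hsum := ht.toFinset.set_ncard_biUnion_le s
  simp only [Set.Finite.mem_toFinset] at hsum
  calc ((⋃ i ∈ t, s i).ncard : ℝ) ≤ ∑ i ∈ ht.toFinset, ((s i).ncard : ℝ) := by
        exact_mod_cast hsum
    _ ≤ ht.toFinset.card • k :=
      Finset.sum_le_card_nsmul _ _ _ fun i hi ↦ hk i (by simpa using hi)
    _ = k * t.ncard := by rw [nsmul_eq_mul, Set.ncard_eq_toFinset_card t ht, mul_comm]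

theorem le_logb_two_of_two_pow_le {k n : ℕ} (h : 2 ^ k ≤ n) : (k : ℝ) ≤ Real.logb 2 n :=
  (Nat.cast_le.2 (Nat.le_log_of_pow_le one_lt_two h)).trans (Real.natLog_le_logb n 2)

section

variable {V : Type} (G : SimpleGraph V)

@[simp]
theorem nbhdOutside_empty : nbhdOutside G ∅ = ∅ := by
  simp [nbhdOutside]

theorem nbhdOutside_insert (w : V) (U : Set V) :
    nbhdOutside G (insert w U) = (nbhdOutside G U \ {w}) ∪ (G.neighborSet w \ insert w U) := by
  ext x
  simp only [nbhdOutside, Set.mem_insert_iff, SimpleGraph.mem_neighborSet, Set.mem_union,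
    Set.mem_sdiff, Set.mem_ofPred_eq, Set.mem_singleton_iff, exists_eq_or_imp, not_or]
  constructor
  · rintro ⟨⟨hxw, hxU⟩, hwx | hU⟩
    · exact Or.inr ⟨hwx.symm, hxw, hxU⟩
    · exact Or.inl ⟨⟨hxU, hU⟩, hxw⟩
  · rintro (⟨⟨hxU, hU⟩, hxw⟩ | ⟨hwx, hxw, hxU⟩)
    · exact ⟨⟨hxw, hxU⟩, Or.inr hU⟩
    · exact ⟨⟨hxw, hxU⟩, Or.inl hwx.symm⟩

def edgesOut (W T : Set V) : Set (Sym2 V) :=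
  ⋃ w ∈ W, (fun x ↦ s(w, x)) '' (G.neighborSet w \ T)

theorem edgesOut_subset_edgeSet (W T : Set V) : edgesOut G W T ⊆ G.edgeSet := by
  simp only [edgesOut, Set.iUnion_subset_iff, Set.image_subset_iff]
  exact fun w _ x hx ↦ hx.1

theorem nbhdOutside_deleteEdges_edgesOut_subset (W T : Set V) :
    nbhdOutside (G.deleteEdges (edgesOut G W T)) W ⊆ T \ W := by
  rintro x ⟨hxW, w, hw, hadj⟩
  rw [SimpleGraph.deleteEdges_adj] at hadj
  refine ⟨by_contra fun hxT ↦ hadj.2 ?_, hxW⟩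
  exact Set.mem_biUnion hw ⟨x, ⟨hadj.1.symm, hxT⟩, Sym2.eq_swap⟩

variable [Finite V]

theorem ncard_nbhdOutside_le_ncard_insert_add_one (w : V) (U : Set V) :
    (nbhdOutside G U).ncard ≤ (nbhdOutside G (insert w U)).ncard + 1 := by
  calc (nbhdOutside G U).ncard ≤ (nbhdOutside G U \ {w}).ncard + ({w} : Set V).ncard :=
        Set.ncard_le_ncard_sdiff_add_ncard _ _
    _ ≤ (nbhdOutside G (insert w U)).ncard + 1 := by
      rw [Set.ncard_singleton, nbhdOutside_insert]
      exact Nat.add_le_add_right (Set.ncard_le_ncard Set.subset_union_left) 1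

theorem ncard_nbhdOutside_add_ncard_le_ncard_insert {w : V} {U T : Set V}
    (hw : w ∉ nbhdOutside G U) (hT : insert w U ⊆ T) :
    (nbhdOutside G U).ncard + (G.neighborSet w \ (nbhdOutside G U ∪ T)).ncard ≤
      (nbhdOutside G (insert w U)).ncard := by
  rw [← Set.ncard_union_eq (Set.disjoint_left.2 fun x hx hx' ↦ hx'.2 (Or.inl hx))]
  refine Set.ncard_le_ncard ?_
  rw [nbhdOutside_insert, Set.sdiff_singleton_eq_self hw]
  exact Set.union_subset_union_right _
    (Set.sdiff_subset_sdiff_right (hT.trans Set.subset_union_right))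

theorem exists_subset_maximal_expanding (U : Set V) (k : ℝ) :
    ∃ U' ⊆ U, k * U'.ncard ≤ (nbhdOutside G U').ncard ∧
      ∀ w ∈ U \ U', ((nbhdOutside G (insert w U')).ncard : ℝ) < k * (U'.ncard + 1) := by
  obtain ⟨U', ⟨hU'U, hexp⟩, hmax⟩ := Set.exists_max_image
    {U' | U' ⊆ U ∧ k * U'.ncard ≤ (nbhdOutside G U').ncard} Set.ncard (Set.toFinite _)
    ⟨∅, Set.empty_subset U, by simp⟩
  refine ⟨U', hU'U, hexp, fun w hw ↦ lt_of_not_ge fun hext ↦ ?_⟩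
  have hcard : (insert w U').ncard = U'.ncard + 1 := Set.ncard_insert_of_notMem hw.2
  have := hmax (insert w U') ⟨Set.insert_subset hw.1 hU'U, by rwa [hcard, Nat.cast_succ]⟩
  omega

theorem ncard_edgesOut_le {W T : Set V} {k : ℝ}
    (hk : ∀ w ∈ W, ((G.neighborSet w \ T).ncard : ℝ) ≤ k) :
    ((edgesOut G W T).ncard : ℝ) ≤ k * W.ncard :=
  (Set.toFinite W).ncard_biUnion_le_mul _ fun w hw ↦
    (Nat.cast_le.2 (Set.ncard_image_le (Set.toFinite _))).trans (hk w hw)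

variable {G} in
theorem IsExpander.le_of_maximal_expanding {ε s k : ℝ} (hG : IsExpander G ε s) (hε : 0 ≤ ε)
    (hks : k ≤ s) {U U' : Set V} (hU : (U.ncard : ℝ) ≤ 2 / 3 * Nat.card V) (hU'U : U' ⊆ U)
    (hexp : k * U'.ncard ≤ (nbhdOutside G U').ncard)
    (hstuck : ∀ w ∈ U \ U', ((nbhdOutside G (insert w U')).ncard : ℝ) < k * (U'.ncard + 1)) :
    ε * (U.ncard - U'.ncard - (nbhdOutside G U').ncard) / Real.logb 2 (Nat.card V) ^ 2 ≤
      (nbhdOutside G U').ncard + U'.ncard := by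
  set Z := nbhdOutside G U'
  set W := (U \ U') \ Z
  have hW : (U.ncard : ℝ) - U'.ncard - Z.ncard ≤ W.ncard := by
    have h := Set.ncard_le_ncard_sdiff_add_ncard (U \ U') Z
    rw [Set.ncard_sdiff hU'U] at h
    have := Set.ncard_le_ncard hU'U
    rw [← Nat.cast_le (α := ℝ), Nat.cast_add, Nat.cast_sub this] at h
    linarith
  have hnew : ∀ w ∈ W, ((G.neighborSet w \ (Z ∪ U)).ncard : ℝ) ≤ k := by
    intro w hw
    have h := ncard_nbhdOutside_add_ncard_le_ncard_insert G hw.2 (Set.insert_subset hw.1.1 hU'U)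
    have := hstuck w hw.1
    rw [← Nat.cast_le (α := ℝ), Nat.cast_add] at h
    linarith
  rcases W.eq_empty_or_nonempty with hW0 | hWne
  · rw [hW0, Set.ncard_empty, Nat.cast_zero] at hW
    calc ε * (U.ncard - U'.ncard - Z.ncard) / Real.logb 2 (Nat.card V) ^ 2 ≤ 0 :=
          div_nonpos_of_nonpos_of_nonneg (mul_nonpos_of_nonneg_of_nonpos hε hW) (sq_nonneg _)
      _ ≤ Z.ncard + U'.ncard := by positivity
  have hF : ((edgesOut G W (Z ∪ U)).ncard : ℝ) ≤ s * W.ncard :=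
    (ncard_edgesOut_le G hnew).trans (by gcongr)
  have hN : nbhdOutside (G.deleteEdges (edgesOut G W (Z ∪ U))) W ⊆ Z ∪ U' := by
    refine (nbhdOutside_deleteEdges_edgesOut_subset G W (Z ∪ U)).trans ?_
    rintro x ⟨hxZ | hxU, hxW⟩
    · exact Or.inl hxZ
    · by_contra hx
      simp only [Set.mem_union, not_or] at hx
      exact hxW ⟨⟨hxU, hx.2⟩, hx.1⟩
  calc ε * (U.ncard - U'.ncard - Z.ncard) / Real.logb 2 (Nat.card V) ^ 2
      ≤ ε * (W.ncard : ℝ) / Real.logb 2 (Nat.card V) ^ 2 := by gcongr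
    _ ≤ ((nbhdOutside (G.deleteEdges (edgesOut G W (Z ∪ U))) W).ncard : ℝ) :=
      hG W _ (edgesOut_subset_edgeSet G W _) ((Set.ncard_pos (Set.toFinite _)).2 hWne)
        ((Nat.cast_le.2 (Set.ncard_le_ncard fun _ hx ↦ hx.1.1)).trans hU) hF
    _ ≤ ((Z ∪ U').ncard : ℝ) := Nat.cast_le.2 (Set.ncard_le_ncard hN)
    _ ≤ (Z.ncard : ℝ) + U'.ncard := by exact_mod_cast Set.ncard_union_le Z U'

end

theorem div_le_of_stuck_estimate {L ε u i Z : ℝ} (hL : 2 ≤ L) (hε0 : 0 < ε) (hε1 : ε ≤ 1)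
    (hi : 1 ≤ i) (hZ0 : 0 ≤ Z) (hZ : Z < L ^ 24 * (i + 1) + 1)
    (hest : ε * (u - i - Z) / L ^ 2 ≤ Z + i) :
    ε * u / (3 * L ^ 26) ≤ i := by
  set m := ε * u / (3 * L ^ 26)
  by_contra! him
  have hcu : ε * u / L ^ 2 = 3 * L ^ 24 * m := by
    simp only [m]
    field_simp
  have hc : ε / L ^ 2 ≤ 1 / 4 := by
    rw [div_le_div_iff₀ (by positivity) four_pos]
    nlinarith
  have hL24 : 5 ≤ L ^ 24 :=
    calc (5 : ℝ) ≤ 2 ^ 24 := by norm_num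
      _ ≤ L ^ 24 := by gcongr
  have hsplit : ε * (u - i - Z) / L ^ 2 = ε * u / L ^ 2 - ε / L ^ 2 * (Z + i) := by ring
  have hcZ : ε / L ^ 2 * (Z + i) ≤ (Z + i) / 4 := by nlinarith
  have hLi : L ^ 24 * i < L ^ 24 * m := by gcongr
  have hLm : L ^ 24 ≤ L ^ 24 * m := le_mul_of_one_le_right (by positivity) (by linarith)
  have h5m : 5 * m ≤ L ^ 24 * m := by gcongr; linarith
  linarith

/-- Every `U` with `|U| ≤ (2/3)n` in an `(ε,s)`-expander contains a well-expanding subset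
`U'` with `|N_G(U')| ≥ |U'|(log n)²⁴` and `|U'| ≥ ε|U|/(3(log n)²⁶)`. -/
theorem well_expanding_core
    (n : ℕ) (hn : 2 ≤ n) (ε s : ℝ) (hε0 : 0 < ε) (hε1 : ε ≤ 1)
    (hs : (Real.logb 2 n) ^ 24 ≤ s)
    (V : Type) [Fintype V] (G : SimpleGraph V) (hcard : Nat.card V = n)
    (hG : IsExpander G ε s)
    (U : Set V) (hU : (U.ncard : ℝ) ≤ 2 / 3 * n) :
    ∃ U' ⊆ U,
      (U'.ncard : ℝ) * (Real.logb 2 n) ^ 24 ≤ ((nbhdOutside G U').ncard : ℝ) ∧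
      ε * (U.ncard : ℝ) / (3 * (Real.logb 2 n) ^ 26) ≤ (U'.ncard : ℝ) := by
  subst hcard
  set L := Real.logb 2 (Nat.card V)
  obtain ⟨U', hU'U, hexp, hstuck⟩ := exists_subset_maximal_expanding G U (L ^ 24)
  refine ⟨U', hU'U, by linarith, le_of_not_gt fun hsmall ↦ ?_⟩
  have hest := hG.le_of_maximal_expanding hε0.le hs hU hU'U hexp hstuck
  rcases Nat.eq_zero_or_pos U'.ncard with h0 | hpos
  · obtain rfl := (Set.ncard_eq_zero (Set.toFinite _)).1 h0
    simp only [Set.ncard_empty, nbhdOutside_empty, CharP.cast_eq_zero, sub_zero, add_zero]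
      at hest hsmall
    have : ε * U.ncard / (3 * L ^ 26) = ε * U.ncard / L ^ 2 / (3 * L ^ 24) := by ring
    exact hsmall.not_ge (this ▸ div_nonpos_of_nonpos_of_nonneg hest (by positivity))
  have hi : (1 : ℝ) ≤ U'.ncard := by exact_mod_cast hpos
  have hL1 : (1 : ℝ) ≤ L := by exact_mod_cast le_logb_two_of_two_pow_le (k := 1) hn
  have hL26 : (1 : ℝ) ≤ L ^ 26 := one_le_pow₀ hL1
  have hεU : U'.ncard * (3 * L ^ 26) < ε * U.ncard := (lt_div_iff₀ (by positivity)).1 hsmall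
  obtain ⟨w, hw⟩ : (U \ U').Nonempty := Set.sdiff_nonempty_of_ncard_lt_ncard <| by
    exact_mod_cast (show (U'.ncard : ℝ) < U.ncard by nlinarith)
  have hL2 : (2 : ℝ) ≤ L := by
    have hU3 : 3 < U.ncard := by exact_mod_cast (show (3 : ℝ) < U.ncard by nlinarith)
    exact_mod_cast le_logb_two_of_two_pow_le (k := 2) (by have := Set.ncard_le_card U; omega)
  have hZ := ncard_nbhdOutside_le_ncard_insert_add_one G w U'
  exact hsmall.not_ge (div_le_of_stuck_estimate hL2 hε0 hε1 hi (by positivity)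
    (by have := hstuck w hw; push_cast [← Nat.cast_le (α := ℝ)] at hZ; linarith) hest)
end

section
/- Let 1 ≤ ℓ, t ≤ n. Let G be an n-vertex graph and let V ⊆ V(G) be a set of size |V| ≥ 4t − 2 such that for every U ⊆ V(G) with |U| = t we have |B^ℓ_G(U,V)| > |V|/2. Let x₁, …, x_{2t−1}, y₁, …, y_{2t−1} be distinct vertices of G. Then, for some j ∈ [2t−1], there is an x_j y_j-path in G all of whose internal vertices lie in V, with length at most 4ℓ·log n. -/
/-- `B^r_G(U,W)`: the set of vertices of `W` reachable from some vertex of `U` by a path in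
`G` of length at most `r` all of whose internal vertices lie in `W`. -/
def ballThrough {V : Type} (G : SimpleGraph V) (r : ℝ) (U W : Set V) : Set V :=
  {v | v ∈ W ∧ ∃ u ∈ U, ∃ p : G.Walk u v, p.IsPath ∧ ((p.length : ℝ) ≤ r) ∧
    ∀ w ∈ p.support.tail.dropLast, w ∈ W}

/-!
Call `v` small at radius `R` if `{v} ∪ B^R({v}, W)` has fewer than `t` vertices, and let
`L = ⌊log n⌋`. If `v` is not small at radius `Lℓ`, a `t`-subset of that set expands into
`B^{(L+1)ℓ}({v}, W)`, which therefore holds more than half of `W`; if both `x_j` and `y_j` are of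
this kind, their two balls meet and give an `x_j y_j`-path of length at most
`2(L + 1)ℓ ≤ 4ℓ log n`. Otherwise every pair has a member that is small at radius `Lℓ`, giving
`t` distinct such vertices, and `t ≤ 2^L`. This is impossible: by induction on `d`, the
radius-`r` sets of `2^d` vertices that are small at radius `r + dℓ` have fewer than `t`
vertices in their union. Otherwise a `t`-set `U` in the union has `B^ℓ(U, W)` inside the
radius-`(r + ℓ)` sets of two halves, each with fewer than `t` vertices by induction,
contradicting `|B^ℓ(U, W)| > |W| / 2 ≥ 2t - 1`.
-/

namespace SimpleGraph.Walk

variable {V : Type} {G : SimpleGraph V} {W : Set V} {u v z : V}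

theorem mem_insert_insert_of_mem_support {p : G.Walk u v}
    (hp : ∀ w ∈ p.support.tail.dropLast, w ∈ W) (hz : z ∈ p.support) :
    z ∈ insert u (insert v W) := by
  cases p with
  | nil => simp_all
  | cons h q =>
    rw [support_cons, List.mem_cons, ← q.dropLast_support_concat] at hz
    simp only [support_cons, List.tail_cons] at hp
    grind

theorem IsPath.ne_of_mem_support_tail_dropLast {p : G.Walk u v} (hp : p.IsPath)
    (hz : z ∈ p.support.tail.dropLast) : z ≠ u ∧ z ≠ v := by
  cases p with
  | nil => simp at hz
  | cons h q =>
    have hnd := hp.support_nodup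
    rw [support_cons, List.nodup_cons, ← q.dropLast_support_concat] at hnd
    simp only [support_cons, List.tail_cons] at hz
    grind

theorem exists_isPath_of_support_subset [DecidableEq V] (p : G.Walk u v)
    (hp : ∀ w ∈ p.support, w ∈ insert u (insert v W)) :
    ∃ q : G.Walk u v, q.IsPath ∧ q.length ≤ p.length ∧
      ∀ w ∈ q.support.tail.dropLast, w ∈ W := by
  refine ⟨p.bypass, p.bypass_isPath, p.length_bypass_le_length, fun w hw ↦ ?_⟩
  have hne := p.bypass_isPath.ne_of_mem_support_tail_dropLast hw
  have hmem := hp w <|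
    p.support_bypass_subset_support (List.tail_subset _ (List.dropLast_subset _ hw))
  simpa [hne.1, hne.2] using hmem

theorem exists_isPath_of_append {a m b : V} (p : G.Walk a m) (q : G.Walk m b) (hm : m ∈ W)
    (hp : ∀ w ∈ p.support, w ∈ insert a (insert m W))
    (hq : ∀ w ∈ q.support, w ∈ insert m (insert b W)) :
    ∃ r : G.Walk a b, r.IsPath ∧ r.length ≤ p.length + q.length ∧
      ∀ w ∈ r.support.tail.dropLast, w ∈ W := by
  classical
  obtain ⟨r, hr, hlen, hW⟩ := (p.append q).exists_isPath_of_support_subset (W := W) <| by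
    intro w hw
    rcases (mem_support_append_iff p q).mp hw with hw | hw
    · have := hp w hw; grind
    · have := hq w hw; grind
  exact ⟨r, hr, length_append p q ▸ hlen, hW⟩

end SimpleGraph.Walk

theorem Set.inter_nonempty_of_ncard_lt_ncard_add_ncard {α : Type*} {s t u : Set α}
    (hts : t ⊆ s) (hus : u ⊆ s) (hs : s.Finite) (h : s.ncard < t.ncard + u.ncard) :
    (t ∩ u).Nonempty := by
  by_contra hdisj
  have hdisj : Disjoint t u :=
    Set.disjoint_iff_inter_eq_empty.mpr (Set.not_nonempty_iff_eq_empty.mp hdisj)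
  have := Set.ncard_le_ncard (Set.union_subset hts hus) hs
  rw [Set.ncard_union_eq hdisj (hs.subset hts) (hs.subset hus)] at this
  omega

theorem Finset.exists_union_eq_of_card_le_add {α : Type*} [DecidableEq α] {s : Finset α}
    {m n : ℕ} (h : s.card ≤ m + n) :
    ∃ s₁ s₂ : Finset α, s₁ ∪ s₂ = s ∧ s₁.card ≤ m ∧ s₂.card ≤ n := by
  obtain ⟨s₁, hs₁, hcard⟩ := s.exists_subset_card_eq (min_le_right m s.card)
  refine ⟨s₁, s \ s₁, Finset.union_sdiff_of_subset hs₁, hcard ▸ min_le_left m _, ?_⟩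
  rw [Finset.card_sdiff_of_subset hs₁]
  omega

open SimpleGraph

section Balls

variable {V : Type} {G : SimpleGraph V} {W U : Set V} {u v z : V}

def centredBallThrough (G : SimpleGraph V) (r : ℕ) (v : V) (W : Set V) : Set V :=
  insert v (ballThrough G r {v} W)

theorem ballThrough_subset (G : SimpleGraph V) (r : ℝ) (U W : Set V) :
    ballThrough G r U W ⊆ W :=
  fun _ hz ↦ hz.1

theorem ballThrough_mono {r s : ℝ} (hrs : r ≤ s) : ballThrough G r U W ⊆ ballThrough G s U W := by
  rintro z ⟨hzW, u, hu, p, hp, hlen, hint⟩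
  exact ⟨hzW, u, hu, p, hp, hlen.trans hrs, hint⟩

theorem ballThrough_eq_biUnion (G : SimpleGraph V) (r : ℝ) (U W : Set V) :
    ballThrough G r U W = ⋃ u ∈ U, ballThrough G r {u} W := by
  ext z
  simp [ballThrough]

theorem mem_ballThrough_add {r s : ℕ} (hu : u ∈ centredBallThrough G r v W)
    (hz : z ∈ ballThrough G s {u} W) : z ∈ ballThrough G (r + s : ℕ) {v} W := by
  rcases hu with rfl | ⟨huW, v', rfl, p, -, hp, hpW⟩
  · exact ballThrough_mono (by simp) hz
  obtain ⟨hzW, u', rfl, q, -, hq, hqW⟩ := hz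
  obtain ⟨r', hr', hlen, hr'W⟩ := p.exists_isPath_of_append q huW
    (fun w hw ↦ p.mem_insert_insert_of_mem_support hpW hw)
    (fun w hw ↦ q.mem_insert_insert_of_mem_support hqW hw)
  refine ⟨hzW, v', rfl, r', hr', ?_, hr'W⟩
  exact_mod_cast hlen.trans (Nat.add_le_add (by exact_mod_cast hp) (by exact_mod_cast hq))

theorem ballThrough_subset_biUnion_centredBallThrough {r s : ℕ} {F : Finset V}
    (hU : U ⊆ ⋃ v ∈ F, centredBallThrough G r v W) :
    ballThrough G s U W ⊆ ⋃ v ∈ F, centredBallThrough G (r + s) v W := by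
  intro z hz
  rw [ballThrough_eq_biUnion, Set.mem_iUnion₂] at hz
  obtain ⟨u, hu, hzu⟩ := hz
  obtain ⟨v, hv, huv⟩ := Set.mem_iUnion₂.mp (hU hu)
  exact Set.mem_biUnion hv (Set.mem_insert_of_mem _ (mem_ballThrough_add huv hzu))

theorem exists_isPath_of_mem_ballThrough {a b w : V} {r s : ℕ}
    (ha : w ∈ ballThrough G r {a} W) (hb : w ∈ ballThrough G s {b} W) :
    ∃ p : G.Walk a b, p.IsPath ∧ p.length ≤ r + s ∧ ∀ z ∈ p.support.tail.dropLast, z ∈ W := by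
  obtain ⟨hwW, a', rfl, p, -, hp, hpW⟩ := ha
  obtain ⟨-, b', rfl, q, -, hq, hqW⟩ := hb
  obtain ⟨r', hr', hlen, hr'W⟩ := p.exists_isPath_of_append q.reverse hwW
    (fun z hz ↦ p.mem_insert_insert_of_mem_support hpW hz)
    (fun z hz ↦ by
      have := q.mem_insert_insert_of_mem_support hqW (by simpa using hz)
      grind)
  rw [Walk.length_reverse] at hlen
  refine ⟨r', hr', hlen.trans (Nat.add_le_add ?_ ?_), hr'W⟩ <;> assumption_mod_cast

end Balls

section Expansion

variable {V : Type} [Finite V] {G : SimpleGraph V} {W : Set V} {ℓ t : ℕ}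

theorem ncard_biUnion_centredBallThrough_lt (ht : 0 < t)
    (hexp : ∀ U : Set V, U.ncard = t → 2 * (t - 1) < (ballThrough G ℓ U W).ncard)
    (d r : ℕ) (F : Finset V) (hF : F.card ≤ 2 ^ d)
    (hsmall : ∀ v ∈ F, (centredBallThrough G (r + d * ℓ) v W).ncard < t) :
    (⋃ v ∈ F, centredBallThrough G r v W).ncard < t := by
  classical
  induction d generalizing r F with
  | zero =>
    rcases F.eq_empty_or_nonempty with rfl | hne
    · simpa using ht
    · obtain ⟨v, rfl⟩ := Finset.card_eq_one.mp (le_antisymm hF hne.card_pos)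
      simpa using hsmall v (Finset.mem_singleton_self v)
  | succ d ih =>
    by_contra! hbig
    obtain ⟨U, hU, hUt⟩ := Set.exists_subset_card_eq hbig
    obtain ⟨F₁, F₂, rfl, hF₁, hF₂⟩ := Finset.exists_union_eq_of_card_le_add (m := 2 ^ d)
      (n := 2 ^ d) (by rwa [← two_mul, ← pow_succ'])
    have hsmall' : ∀ v ∈ F₁ ∪ F₂, (centredBallThrough G (r + ℓ + d * ℓ) v W).ncard < t := by
      intro v hv
      convert hsmall v hv using 3
      ring
    have hB : ballThrough G ℓ U W ⊆ (⋃ v ∈ F₁, centredBallThrough G (r + ℓ) v W) ∪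
        ⋃ v ∈ F₂, centredBallThrough G (r + ℓ) v W := by
      rw [← Finset.set_biUnion_union]
      exact ballThrough_subset_biUnion_centredBallThrough hU
    have h₁ := ih (r + ℓ) F₁ hF₁ fun v hv ↦ hsmall' v (Finset.mem_union_left _ hv)
    have h₂ := ih (r + ℓ) F₂ hF₂ fun v hv ↦ hsmall' v (Finset.mem_union_right _ hv)
    have := (Set.ncard_le_ncard hB).trans (Set.ncard_union_le _ _)
    have := hexp U hUt
    omega

theorem exists_le_ncard_centredBallThrough (ht : 0 < t)
    (hexp : ∀ U : Set V, U.ncard = t → 2 * (t - 1) < (ballThrough G ℓ U W).ncard)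
    {d : ℕ} {F : Finset V} (hFt : F.card = t) (hFd : t ≤ 2 ^ d) :
    ∃ v ∈ F, t ≤ (centredBallThrough G (d * ℓ) v W).ncard := by
  by_contra! hsmall
  have hlt :=
    ncard_biUnion_centredBallThrough_lt ht hexp d 0 F (hFt ▸ hFd) (by simpa using hsmall)
  have hF : (F : Set V) ⊆ ⋃ v ∈ F, centredBallThrough G 0 v W :=
    fun v hv ↦ Set.mem_biUnion hv (Set.mem_insert v _)
  have := Set.ncard_le_ncard hF
  rw [Set.ncard_coe_finset] at this
  omega

theorem half_lt_ncard_ballThrough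
    (hexp : ∀ U : Set V, U.ncard = t → (W.ncard : ℝ) / 2 < (ballThrough G ℓ U W).ncard)
    {r : ℕ} {v : V} (hv : t ≤ (centredBallThrough G r v W).ncard) :
    (W.ncard : ℝ) / 2 < (ballThrough G (r + ℓ : ℕ) {v} W).ncard := by
  obtain ⟨U, hU, hUt⟩ := Set.exists_subset_card_eq hv
  have hB : ballThrough G ℓ U W ⊆ ballThrough G (r + ℓ : ℕ) {v} W := by
    intro z hz
    rw [ballThrough_eq_biUnion, Set.mem_iUnion₂] at hz
    obtain ⟨u, hu, hzu⟩ := hz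
    exact mem_ballThrough_add (hU hu) hzu
  exact (hexp U hUt).trans_le (by exact_mod_cast Set.ncard_le_ncard hB)

theorem exists_isPath_of_half_lt_ncard {a b : V} {r s : ℕ}
    (ha : (W.ncard : ℝ) / 2 < (ballThrough G r {a} W).ncard)
    (hb : (W.ncard : ℝ) / 2 < (ballThrough G s {b} W).ncard) :
    ∃ p : G.Walk a b, p.IsPath ∧ p.length ≤ r + s ∧ ∀ z ∈ p.support.tail.dropLast, z ∈ W := by
  obtain ⟨w, hwa, hwb⟩ := Set.inter_nonempty_of_ncard_lt_ncard_add_ncard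
    (ballThrough_subset G r {a} W) (ballThrough_subset G s {b} W) W.toFinite
    (by exact_mod_cast (by linarith : (W.ncard : ℝ) <
      (ballThrough G r {a} W).ncard + (ballThrough G s {b} W).ncard))
  exact exists_isPath_of_mem_ballThrough hwa hwb

end Expansion

theorem Finset.exists_card_eq_of_forall_or {α : Type*} {k m : ℕ} {P : α → Prop}
    {x y : Fin k → α} (hx : Function.Injective x) (hy : Function.Injective y)
    (hxy : ∀ i j, x i ≠ y j) (hP : ∀ j, P (x j) ∨ P (y j)) (hm : m ≤ k) :
    ∃ F : Finset α, F.card = m ∧ ∀ v ∈ F, P v := by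
  classical
  let c : Fin k → α := fun j ↦ if P (x j) then x j else y j
  have hc : Function.Injective c := by
    intro i j hij
    simp only [c] at hij
    split_ifs at hij
    · exact hx hij
    · exact absurd hij (hxy i j)
    · exact absurd hij.symm (hxy j i)
    · exact hy hij
  obtain ⟨F, hF, hFm⟩ := (Finset.univ.image c).exists_subset_card_eq
    (show m ≤ (Finset.univ.image c).card by
      rwa [Finset.card_image_of_injective _ hc, Finset.card_univ, Fintype.card_fin])
  refine ⟨F, hFm, fun v hv ↦ ?_⟩
  obtain ⟨j, -, rfl⟩ := Finset.mem_image.mp (hF hv)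
  simp only [c]
  split_ifs with h
  · exact h
  · exact (hP j).resolve_left h

theorem Nat.le_two_pow_log_of_four_mul_sub_two_le {n t : ℕ} (ht : 1 ≤ t) (h : 4 * t - 2 ≤ n) :
    t ≤ 2 ^ Nat.log 2 n := by
  have := Nat.lt_pow_succ_log_self one_lt_two n
  rw [pow_succ] at this
  omega

theorem Nat.log_two_add_one_le_two_mul_logb {n : ℕ} (hn : 2 ≤ n) :
    (Nat.log 2 n + 1 : ℝ) ≤ 2 * Real.logb 2 n := by
  have hL : (1 : ℝ) ≤ Nat.log 2 n := by exact_mod_cast Nat.log_pos one_lt_two hn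
  have hlog : (Nat.log 2 n : ℝ) ≤ Real.logb 2 n := by exact_mod_cast Real.natLog_le_logb n 2
  linarith

theorem connect_one_pair_general
    (n ℓ t : ℕ) (ht1 : 1 ≤ t)
    (V : Type) [Fintype V] (G : SimpleGraph V) (hcard : Nat.card V = n)
    (W : Set V) (hW : 4 * t - 2 ≤ W.ncard)
    (hexp : ∀ U : Set V, U.ncard = t →
      (W.ncard : ℝ) / 2 < ((ballThrough G (ℓ : ℝ) U W).ncard : ℝ))
    (x y : Fin (2 * t - 1) → V)
    (hx : Function.Injective x) (hy : Function.Injective y)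
    (hxy : ∀ i j, x i ≠ y j) :
    ∃ (j : Fin (2 * t - 1)) (p : G.Walk (x j) (y j)),
      p.IsPath ∧ ((p.length : ℝ) ≤ 4 * ℓ * Real.logb 2 n) ∧
      ∀ w ∈ p.support.tail.dropLast, w ∈ W := by
  have hn : 4 * t - 2 ≤ n := hW.trans (hcard ▸ W.ncard_le_card)
  have hexp' (U : Set V) (hU : U.ncard = t) : 2 * (t - 1) < (ballThrough G ℓ U W).ncard := by
    have hW' : (4 * t : ℝ) ≤ W.ncard + 2 := by exact_mod_cast (by omega : 4 * t ≤ W.ncard + 2)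
    have : (2 * t : ℝ) < (ballThrough G ℓ U W).ncard + 1 := by linarith [hexp U hU]
    have : 2 * t < (ballThrough G ℓ U W).ncard + 1 := by exact_mod_cast this
    omega
  set L := Nat.log 2 n
  by_cases hpair : ∃ j, t ≤ (centredBallThrough G (L * ℓ) (x j) W).ncard ∧
      t ≤ (centredBallThrough G (L * ℓ) (y j) W).ncard
  · obtain ⟨j, hxj, hyj⟩ := hpair
    obtain ⟨p, hp, hlen, hpW⟩ := exists_isPath_of_half_lt_ncard
      (half_lt_ncard_ballThrough hexp hxj) (half_lt_ncard_ballThrough hexp hyj)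
    refine ⟨j, p, hp, ?_, hpW⟩
    calc (p.length : ℝ) ≤ 2 * (L + 1) * ℓ := by exact_mod_cast hlen.trans_eq (by ring)
      _ ≤ 4 * ℓ * Real.logb 2 n := by
        nlinarith [Nat.log_two_add_one_le_two_mul_logb (n := n) (by omega),
          Nat.cast_nonneg (α := ℝ) ℓ]
  · simp only [not_exists, not_and, not_le] at hpair
    obtain ⟨F, hFt, hF⟩ := Finset.exists_card_eq_of_forall_or hx hy hxy
      (P := fun v ↦ (centredBallThrough G (L * ℓ) v W).ncard < t)
      (fun j ↦ (lt_or_ge _ t).imp_right (hpair j)) (m := t) (by omega)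
    obtain ⟨v, hvF, hv⟩ := exists_le_ncard_centredBallThrough ht1 hexp' hFt
      (Nat.le_two_pow_log_of_four_mul_sub_two_le ht1 hn)
    exact ((hF v hvF).not_ge hv).elim

/-- If all `t`-sets have large balls through `W`, then among `2t−1` given pairs of
(all-distinct) vertices, some pair is joined by a short path through `W`. -/
theorem connect_one_pair
    (n ℓ t : ℕ) (hℓ1 : 1 ≤ ℓ) (hℓn : ℓ ≤ n) (ht1 : 1 ≤ t) (htn : t ≤ n)
    (V : Type) [Fintype V] (G : SimpleGraph V) (hcard : Nat.card V = n)
    (W : Set V) (hW : 4 * t - 2 ≤ W.ncard)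
    (hexp : ∀ U : Set V, U.ncard = t →
      (W.ncard : ℝ) / 2 < ((ballThrough G (ℓ : ℝ) U W).ncard : ℝ))
    (x y : Fin (2 * t - 1) → V)
    (hx : Function.Injective x) (hy : Function.Injective y)
    (hxy : ∀ i j, x i ≠ y j) :
    ∃ (j : Fin (2 * t - 1)) (p : G.Walk (x j) (y j)),
      p.IsPath ∧ ((p.length : ℝ) ≤ 4 * ℓ * Real.logb 2 n) ∧
      ∀ w ∈ p.support.tail.dropLast, w ∈ W :=
  connect_one_pair_general n ℓ t ht1 V G hcard W hW hexp x y hx hy hxy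
end

section
/- Let k ≥ 1 and b ≥ 1 be integers and let G be the complete bipartite graph with parts A and B of sizes |A| = 2k+1 and |B| = b. Then any partition of the edge set of G into parts, each of which is either the edge set of a cycle of G or a single edge, has at least (3/2 − 1/(4k+2))·b parts. -/
/-- `s` is the edge set of a cycle in `G`. -/
def IsCycleEdgeSet {V : Type} (G : SimpleGraph V) (s : Set (Sym2 V)) : Prop :=
  ∃ (v : V) (c : G.Walk v v), c.IsCycle ∧ s = {e | e ∈ c.edges}

/-!
Every vertex of `B` has odd degree `|A| = 2k+1`, while a cycle uses an even number of the edges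
at each vertex, so every vertex of `B` lies on one of the single edges; as each edge has only one
end in `B`, there are at least `b` single edges. A cycle alternates between the sides and visits
each vertex of `A` at most once, so it has at most `2(2k+1)` edges. Counting the `(2k+1)b` edges
then gives `2(2k+1)m + |E₀| ≥ (2k+1)b` for `m` cycles, and combining this with `|E₀| ≥ b` yields
the bound.
-/

open SimpleGraph Function

theorem List.Nodup.ncard_setOf_mem {α : Type*} {l : List α} (hl : l.Nodup) :
    {a | a ∈ l}.ncard = l.length := by
  classical
  rw [← List.coe_toFinset, Set.ncard_coe_finset, List.toFinset_card_of_nodup hl]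

namespace SimpleGraph

variable {A B : Type*}

theorem Walk.two_mul_countP_isLeft_support_tail {u v : A ⊕ B}
    (p : (completeBipartiteGraph A B).Walk u v) :
    2 * p.support.tail.countP (·.isLeft) + u.isLeft.toNat = p.length + v.isLeft.toNat := by
  induction p with
  | nil => simp
  | cons h p ih =>
    rename_i u w v
    rw [support_cons, List.tail_cons, ← cons_tail_support, List.countP_cons, length_cons]
    rcases u with u | u <;> rcases w with w | w <;> simp_all <;> omega

theorem Walk.IsCycle.length_le_two_mul_card [Fintype A] {v : A ⊕ B}
    {c : (completeBipartiteGraph A B).Walk v v} (hc : c.IsCycle) :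
    c.length ≤ 2 * Fintype.card A := by
  have hlen := c.two_mul_countP_isLeft_support_tail
  have hnodup : (c.support.tail.filterMap Sum.getLeft?).Nodup :=
    hc.support_nodup.filterMap fun x y a hx hy => by
      rcases x with x | x <;> rcases y with y | y <;> simp_all
  have hcard := hnodup.length_le_card
  rw [List.length_filterMap_eq_countP] at hcard
  have hsome : (fun x : A ⊕ B => x.getLeft?.isSome) = (·.isLeft) := by
    funext x; cases x <;> rfl
  rw [hsome] at hcard
  omega

theorem eq_of_inr_mem_edgeSet_completeBipartiteGraph {e : Sym2 (A ⊕ B)}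
    (he : e ∈ (completeBipartiteGraph A B).edgeSet) {j j' : B}
    (hj : Sum.inr j ∈ e) (hj' : Sum.inr j' ∈ e) : j = j' := by
  rw [edgeSet_completeBipartiteGraph] at he
  obtain ⟨⟨a, b⟩, rfl⟩ := he
  simp_all

theorem incidenceSet_completeBipartiteGraph_inr (j : B) :
    (completeBipartiteGraph A B).incidenceSet (Sum.inr j) =
      Set.range (fun a => s(Sum.inl a, Sum.inr j)) := by
  ext e
  induction e using Sym2.ind with
  | _ u v => rcases u with u | u <;> rcases v with v | v <;> simp [incidenceSet]

theorem ncard_incidenceSet_completeBipartiteGraph_inr (j : B) :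
    ((completeBipartiteGraph A B).incidenceSet (Sum.inr j)).ncard = Nat.card A := by
  rw [incidenceSet_completeBipartiteGraph_inr]
  exact Set.ncard_range_of_injective fun a a' h => by simpa using h

theorem ncard_edgeSet_completeBipartiteGraph :
    (completeBipartiteGraph A B).edgeSet.ncard = Nat.card A * Nat.card B := by
  rw [edgeSet_completeBipartiteGraph, Set.ncard_range_of_injective, Nat.card_prod]
  grind [Function.Injective]

end SimpleGraph

namespace IsCycleEdgeSet

variable {V : Type} {G : SimpleGraph V} {s : Set (Sym2 V)}

theorem finite (hs : IsCycleEdgeSet G s) : s.Finite := by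
  obtain ⟨v, c, -, rfl⟩ := hs
  exact c.edges.finite_toSet

theorem even_ncard_incident (hs : IsCycleEdgeSet G s) (x : V) :
    Even {e ∈ s | x ∈ e}.ncard := by
  classical
  obtain ⟨v, c, hc, rfl⟩ := hs
  have hfilter : {e ∈ {e | e ∈ c.edges} | x ∈ e} = {e | e ∈ c.edges.filter (x ∈ ·)} := by
    ext; simp
  rw [hfilter, (hc.edges_nodup.filter _).ncard_setOf_mem, ← List.countP_eq_length_filter]
  exact (hc.isTrail.even_countP_edges_iff x).mpr (absurd rfl)

theorem ncard_le_two_mul_card {A B : Type} [Fintype A] {s : Set (Sym2 (A ⊕ B))}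
    (hs : IsCycleEdgeSet (completeBipartiteGraph A B) s) : s.ncard ≤ 2 * Fintype.card A := by
  obtain ⟨v, c, hc, rfl⟩ := hs
  rw [hc.edges_nodup.ncard_setOf_mem, Walk.length_edges]
  exact hc.length_le_two_mul_card

end IsCycleEdgeSet

section Decomposition

variable {V ι : Type} {G : SimpleGraph V} {c : ι → Set (Sym2 V)} {E₀ : Set (Sym2 V)}

theorem exists_mem_of_odd_ncard_incidenceSet [Finite ι] (hc : ∀ i, IsCycleEdgeSet G (c i))
    (hdisj : Pairwise (Disjoint on c)) (hcover : (⋃ i, c i) ∪ E₀ = G.edgeSet) {x : V}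
    (hx : Odd (G.incidenceSet x).ncard) : ∃ e ∈ E₀, x ∈ e := by
  by_contra! hE₀
  have hinc : G.incidenceSet x = ⋃ i, {e ∈ c i | x ∈ e} := by
    ext e
    simp only [incidenceSet, ← hcover, Set.mem_ofPred_eq, Set.mem_union, Set.mem_iUnion]
    exact ⟨fun ⟨he, hxe⟩ => (he.resolve_right (hE₀ e · hxe)).imp fun _ hi => ⟨hi, hxe⟩,
      fun ⟨i, hi, hxe⟩ => ⟨.inl ⟨i, hi⟩, hxe⟩⟩
  rw [hinc, Set.ncard_iUnion_of_finite (fun i => (hc i).finite.subset (Set.sep_subset _ _))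
    fun i j hij => (hdisj hij).mono (Set.sep_subset _ _) (Set.sep_subset _ _)] at hx
  exact Nat.not_even_iff_odd.mpr hx <|
    finsum_induction Even Even.zero (fun _ _ => Even.add) fun i => (hc i).even_ncard_incident x

theorem ncard_edgeSet_le_sum_add_ncard [Fintype ι] (hcover : (⋃ i, c i) ∪ E₀ = G.edgeSet) :
    G.edgeSet.ncard ≤ ∑ i, (c i).ncard + E₀.ncard :=
  hcover ▸ (Set.ncard_union_le _ _).trans
    (Nat.add_le_add_right (Set.ncard_iUnion_le_of_fintype c) _)

end Decomposition

theorem card_le_ncard_of_forall_exists_mem_inr {A B : Type} {E₀ : Set (Sym2 (A ⊕ B))}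
    (hfin : E₀.Finite) (hE₀ : E₀ ⊆ (completeBipartiteGraph A B).edgeSet)
    (hcov : ∀ j : B, ∃ e ∈ E₀, Sum.inr j ∈ e) : Nat.card B ≤ E₀.ncard := by
  choose f hfE₀ hf using hcov
  rw [← Set.ncard_univ]
  refine Set.ncard_le_ncard_of_injOn f (fun j _ => hfE₀ j) (fun j _ j' _ h => ?_) hfin
  exact eq_of_inr_mem_edgeSet_completeBipartiteGraph (hE₀ (hfE₀ j)) (hf j) (h ▸ hf j')

theorem le_card_add_ncard_of_decomposition {A B ι : Type} [Fintype A] [Fintype B] [Fintype ι]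
    (hA : Odd (Fintype.card A)) {c : ι → Set (Sym2 (A ⊕ B))} {E₀ : Set (Sym2 (A ⊕ B))}
    (hc : ∀ i, IsCycleEdgeSet (completeBipartiteGraph A B) (c i))
    (hE₀ : E₀ ⊆ (completeBipartiteGraph A B).edgeSet) (hdisj : Pairwise (Disjoint on c))
    (hcover : (⋃ i, c i) ∪ E₀ = (completeBipartiteGraph A B).edgeSet) :
    ((3 : ℝ) / 2 - 1 / (2 * Fintype.card A)) * Fintype.card B ≤ Fintype.card ι + E₀.ncard := by
  set n := Fintype.card A
  have hE₀B : Fintype.card B ≤ E₀.ncard := by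
    rw [← Nat.card_eq_fintype_card]
    refine card_le_ncard_of_forall_exists_mem_inr E₀.toFinite hE₀ fun j => ?_
    refine exists_mem_of_odd_ncard_incidenceSet hc hdisj hcover ?_
    rwa [ncard_incidenceSet_completeBipartiteGraph_inr, Nat.card_eq_fintype_card]
  have hedges : n * Fintype.card B ≤ 2 * n * Fintype.card ι + E₀.ncard :=
    calc n * Fintype.card B = (completeBipartiteGraph A B).edgeSet.ncard := by
          simp [n, ncard_edgeSet_completeBipartiteGraph]
      _ ≤ ∑ i, (c i).ncard + E₀.ncard := ncard_edgeSet_le_sum_add_ncard hcover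
      _ ≤ ∑ _i : ι, 2 * n + E₀.ncard := by
          gcongr with i
          exact (hc i).ncard_le_two_mul_card
      _ = 2 * n * Fintype.card ι + E₀.ncard := by simp [mul_comm]
  have hn : (1 : ℝ) ≤ n := by exact_mod_cast hA.pos
  have hE₀B' : (Fintype.card B : ℝ) ≤ E₀.ncard := by exact_mod_cast hE₀B
  have hedges' : (n : ℝ) * Fintype.card B ≤ 2 * n * Fintype.card ι + E₀.ncard := by
    exact_mod_cast hedges
  rw [← mul_le_mul_iff_of_pos_left (by positivity : (0 : ℝ) < 2 * n)]
  have hscale : (2 * n : ℝ) * ((3 / 2 - 1 / (2 * n)) * Fintype.card B) =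
      (3 * n - 1) * Fintype.card B := by
    field_simp
  rw [hscale]
  linarith [mul_le_mul_of_nonneg_left hE₀B' (by linarith : (0 : ℝ) ≤ 2 * n - 1)]

theorem completeBipartite_lower_bound_general
    (k b : ℕ)
    (G : SimpleGraph (Fin (2 * k + 1) ⊕ Fin b))
    (hG : G = completeBipartiteGraph (Fin (2 * k + 1)) (Fin b)) :
    ∀ (m : ℕ) (c : Fin m → Set (Sym2 (Fin (2 * k + 1) ⊕ Fin b)))
      (E₀ : Set (Sym2 (Fin (2 * k + 1) ⊕ Fin b))),
      (∀ i, IsCycleEdgeSet G (c i)) →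
      E₀ ⊆ G.edgeSet →
      (∀ i j, i ≠ j → Disjoint (c i) (c j)) →
      (∀ i, Disjoint (c i) E₀) →
      ((⋃ i, c i) ∪ E₀ = G.edgeSet) →
      ((3 : ℝ) / 2 - 1 / (4 * k + 2)) * b ≤ (m : ℝ) + (E₀.ncard : ℝ) := by
  subst hG
  intro m c E₀ hc hE₀ hdisj _ hcover
  have h := le_card_add_ncard_of_decomposition (by simp) hc hE₀ hdisj hcover
  simp only [Fintype.card_fin, Nat.cast_add, Nat.cast_mul, Nat.cast_ofNat, Nat.cast_one] at h
  convert h using 4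
  ring

/-- Any decomposition of the complete bipartite graph `K_{2k+1,b}` into cycles and edges
has at least `(3/2 − 1/(4k+2))·b` parts. -/
theorem completeBipartite_lower_bound
    (k b : ℕ) (hk : 1 ≤ k) (hb : 1 ≤ b)
    (G : SimpleGraph (Fin (2 * k + 1) ⊕ Fin b))
    (hG : G = completeBipartiteGraph (Fin (2 * k + 1)) (Fin b)) :
    ∀ (m : ℕ) (c : Fin m → Set (Sym2 (Fin (2 * k + 1) ⊕ Fin b)))
      (E₀ : Set (Sym2 (Fin (2 * k + 1) ⊕ Fin b))),
      (∀ i, IsCycleEdgeSet G (c i)) →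
      E₀ ⊆ G.edgeSet →
      (∀ i j, i ≠ j → Disjoint (c i) (c j)) →
      (∀ i, Disjoint (c i) E₀) →
      ((⋃ i, c i) ∪ E₀ = G.edgeSet) →
      ((3 : ℝ) / 2 - 1 / (4 * k + 2)) * b ≤ (m : ℝ) + (E₀.ncard : ℝ) :=
  completeBipartite_lower_bound_general k b G hG
end
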